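/- arXiv:1510.02119 — 6 statements merged into one kernel-verified Lean document; each statement's English description precedes it below -/
import Mathlib

section
/- Let n ≥ 2, 2 ≤ p < n, and κ > 0. There exists a constant C = C(p, n, κ) > 0 such that for all vectors x, y ∈ ℝⁿ, |x+y|^p ≥ |x|^p + p|x|^{p-2}(x·y) + (1-κ)((p/2)|x|^{p-2}|y|² + (p(p-2)/2)|x|^{p-4}(x·y)²) − C|y|^p, where terms with negative powers of |x| are interpreted as 0 when x = 0. -/
/-!
Dividing by `‖x‖ ^ p` and writing `t = ‖y‖ / ‖x‖`, `u = ⟪x, y⟫ / ‖x‖ ^ 2` (so `|u| ≤ t`), the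
inequality becomes a statement about `(1 + h) ^ (p / 2)` with `h = 2 u + t ^ 2`. For small `t` it
follows from the second-order Taylor expansion of `(1 + h) ^ q` at `h = 0`, obtained from the
second derivative test, the cubic error terms being absorbed by the margin `κ`. For `t` bounded
below, the left-hand side is `O(1 + t ^ 2)`, which is `O(t ^ p)` because `p ≥ 2`.
-/

open Real Filter Topology
open scoped InnerProductSpace

theorem eventually_one_add_mul_add_sq_le_one_add_rpow (q : ℝ) {ε : ℝ} (hε : 0 < ε) :
    ∀ᶠ h in 𝓝 0, 1 + q * h + (q * (q - 1) / 2 - ε) * h ^ 2 ≤ (1 + h) ^ q := by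
  set B := q * (q - 1) / 2 - ε
  set ψ : ℝ → ℝ := fun h ↦ (1 + h) ^ q - (1 + q * h + B * h ^ 2)
  set g : ℝ → ℝ := fun h ↦ q * (1 + h) ^ (q - 1) - (q + 2 * B * h)
  have hψ : ∀ h, 0 < 1 + h → HasDerivAt ψ (g h) h := fun h hh ↦
    ((((hasDerivAt_id h).const_add 1).rpow_const (Or.inl hh.ne')).sub
      ((((hasDerivAt_id h).const_mul q).const_add 1).add
        ((hasDerivAt_pow 2 h).const_mul B))).congr_deriv (by norm_num [g]; ring)
  have hg : HasDerivAt g (2 * ε) 0 :=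
    ((((hasDerivAt_id (0 : ℝ)).const_add 1).rpow_const (Or.inl (by norm_num))).const_mul q |>.sub
      (((hasDerivAt_id (0 : ℝ)).const_mul (2 * B)).const_add q)).congr_deriv
        (by norm_num [B]; ring)
  have hderiv : deriv ψ =ᶠ[𝓝 0] g := by
    filter_upwards [eventually_gt_nhds (by norm_num : (-1 : ℝ) < 0)] with h hh
    exact (hψ h (by linarith)).deriv
  have hmin : IsLocalMin ψ 0 := by
    refine isLocalMin_of_deriv_deriv_pos ?_ ?_ (hψ 0 (by norm_num)).continuousAt
    · rw [hderiv.deriv_eq, hg.deriv]; positivity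
    · rw [hderiv.eq_of_nhds]; simp [g]
  filter_upwards [hmin] with h hh
  simpa [ψ] using hh

theorem exists_pos_quadratic_le_one_add_two_mul_add_sq_rpow {q κ : ℝ} (hq : 1 ≤ q)
    (hκ : 0 < κ) :
    ∃ δ > 0, ∀ t u : ℝ, t ≤ δ → |u| ≤ t →
      1 + 2 * q * u + (1 - κ) * (q * t ^ 2 + 2 * q * (q - 1) * u ^ 2) ≤
        (1 + 2 * u + t ^ 2) ^ q := by
  set B := q * (q - 1) / 2 - κ * q / 8
  obtain ⟨r, hr, hr_taylor⟩ := Metric.eventually_nhds_iff.1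
    (eventually_one_add_mul_add_sq_le_one_add_rpow q (by positivity : 0 < κ * q / 8))
  refine ⟨min (r / 4) (min 1 (κ * q / (10 * (|B| + 1)))), by positivity, fun t u ht hu ↦ ?_⟩
  obtain ⟨hu_lo, hu_hi⟩ := abs_le.1 hu
  have ht0 : 0 ≤ t := (abs_nonneg u).trans hu
  have ht_r : t ≤ r / 4 := ht.trans (min_le_left _ _)
  have ht1 : t ≤ 1 := ht.trans ((min_le_right _ _).trans (min_le_left _ _))
  have htB : 10 * (|B| + 1) * t ≤ κ * q := by
    have := ht.trans ((min_le_right _ _).trans (min_le_right _ _))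
    rwa [le_div_iff₀' (by positivity)] at this
  have hdist : dist (2 * u + t ^ 2) 0 < r := by
    rw [Real.dist_0_eq_abs, abs_lt]; constructor <;> nlinarith
  have htaylor := hr_taylor hdist
  rw [← add_assoc] at htaylor
  have hcubic : |4 * u * t ^ 2 + t ^ 4| ≤ 5 * t ^ 3 := by
    have h1 := mul_le_mul_of_nonneg_right hu_hi (sq_nonneg t)
    have h2 := mul_le_mul_of_nonneg_right hu_lo (sq_nonneg t)
    have h3 : t ^ 4 ≤ t ^ 3 := pow_le_pow_of_le_one ht0 ht1 (by norm_num)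
    rw [abs_le]; constructor <;> nlinarith [pow_nonneg ht0 4]
  -- `B (2u + t²)² = 4B u² + B (4u t² + t⁴)`; the `u²` term falls short of the target by
  -- `κ q u² / 2 ≤ κ q t² / 2`, and the remaining margin `κ q t² / 2` absorbs the cubic part
  have herror : |B| * (5 * t ^ 3) ≤ κ * q / 2 * t ^ 2 := by
    nlinarith [mul_le_mul_of_nonneg_right htB (sq_nonneg t), mul_nonneg ht0 (sq_nonneg t)]
  have hE := (abs_le.1 ((abs_mul B _).trans_le
    (mul_le_mul_of_nonneg_left hcubic (abs_nonneg B)))).1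
  have hu2 : κ * q / 2 * u ^ 2 ≤ κ * q / 2 * t ^ 2 :=
    mul_le_mul_of_nonneg_left (sq_le_sq' hu_lo hu_hi) (by positivity)
  have hq' : 0 ≤ κ * (2 * q * (q - 1) * u ^ 2) := by
    have : 0 ≤ q - 1 := by linarith
    positivity
  linear_combination htaylor + hE + herror + hu2 + hq'

theorem one_add_sq_le_mul_rpow_of_le {q δ t : ℝ} (hq : 1 ≤ q) (hδ : 0 < δ) (ht : δ ≤ t) :
    1 + t ^ 2 ≤ (1 + (δ ^ 2)⁻¹) / δ ^ (2 * q - 2) * t ^ (2 * q) := by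
  have hsplit : t ^ (2 * q) = t ^ (2 * q - 2) * t ^ 2 := by
    rw [← rpow_natCast, ← rpow_add (hδ.trans_le ht)]; norm_num
  have hone : 1 ≤ (δ ^ 2)⁻¹ * t ^ 2 := by
    rw [← div_eq_inv_mul, one_le_div (by positivity)]; gcongr
  have hδq : 0 < δ ^ (2 * q - 2) := by positivity
  calc 1 + t ^ 2 ≤ (1 + (δ ^ 2)⁻¹) * t ^ 2 := by linarith
    _ = (1 + (δ ^ 2)⁻¹) / δ ^ (2 * q - 2) * (δ ^ (2 * q - 2) * t ^ 2) := by field_simp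
    _ ≤ (1 + (δ ^ 2)⁻¹) / δ ^ (2 * q - 2) * (t ^ (2 * q - 2) * t ^ 2) := by
      gcongr; linarith
    _ = _ := by rw [hsplit]

theorem exists_pos_quadratic_le_one_add_two_mul_add_sq_rpow_add {q κ : ℝ} (hq : 1 ≤ q)
    (hκ : 0 < κ) :
    ∃ C > 0, ∀ t u : ℝ, |u| ≤ t →
      1 + 2 * q * u + (1 - κ) * (q * t ^ 2 + 2 * q * (q - 1) * u ^ 2) ≤
        (1 + 2 * u + t ^ 2) ^ q + C * t ^ (2 * q) := by
  obtain ⟨δ, hδ, hsmall⟩ := exists_pos_quadratic_le_one_add_two_mul_add_sq_rpow hq hκ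
  set A := 1 + q + |1 - κ| * (q * (2 * q - 1))
  have hq1 : 0 ≤ q - 1 := by linarith
  have hA : 0 < A := by
    have : 0 ≤ 2 * q - 1 := by linarith
    positivity
  refine ⟨A * ((1 + (δ ^ 2)⁻¹) / δ ^ (2 * q - 2)), by positivity, fun t u hu ↦ ?_⟩
  have hbase : 0 ≤ (1 + 2 * u + t ^ 2) ^ q := by
    have := neg_abs_le u
    exact rpow_nonneg (by nlinarith [sq_nonneg (t - 1)]) q
  rcases le_total t δ with htδ | hδt
  · have : 0 ≤ A * ((1 + (δ ^ 2)⁻¹) / δ ^ (2 * q - 2)) * t ^ (2 * q) := by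
      have : 0 ≤ t := (abs_nonneg u).trans hu
      positivity
    linarith [hsmall t u htδ hu]
  · obtain ⟨hu_lo, hu_hi⟩ := abs_le.1 hu
    have hquad : 0 ≤ q * t ^ 2 + 2 * q * (q - 1) * u ^ 2 := by positivity
    have hquad' : q * t ^ 2 + 2 * q * (q - 1) * u ^ 2 ≤ q * (2 * q - 1) * (1 + t ^ 2) := by
      nlinarith [mul_le_mul_of_nonneg_left (sq_le_sq' hu_lo hu_hi)
        (by positivity : 0 ≤ 2 * q * (q - 1))]
    calc 1 + 2 * q * u + (1 - κ) * (q * t ^ 2 + 2 * q * (q - 1) * u ^ 2)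
        ≤ 1 + q * (1 + t ^ 2) + |1 - κ| * (q * (2 * q - 1) * (1 + t ^ 2)) := by
          gcongr ?_ + ?_
          · nlinarith [sq_nonneg (t - 1)]
          · exact (mul_le_mul_of_nonneg_right (le_abs_self _) hquad).trans
              (mul_le_mul_of_nonneg_left hquad' (abs_nonneg _))
      _ ≤ A * (1 + t ^ 2) := by nlinarith
      _ ≤ A * ((1 + (δ ^ 2)⁻¹) / δ ^ (2 * q - 2) * t ^ (2 * q)) := by
          gcongr; exact one_add_sq_le_mul_rpow_of_le hq hδ hδt
      _ ≤ _ := by linarith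

theorem sq_rpow_div_two {a : ℝ} (ha : 0 ≤ a) (p : ℝ) : (a ^ 2) ^ (p / 2) = a ^ p := by
  rw [← rpow_natCast, ← rpow_mul ha]; ring_nf

theorem quadratic_le_sq_add_two_mul_add_sq_rpow {p κ C a b s : ℝ}
    (hS : ∀ t u : ℝ, |u| ≤ t → 1 + 2 * (p / 2) * u + (1 - κ) * (p / 2 * t ^ 2
      + 2 * (p / 2) * (p / 2 - 1) * u ^ 2) ≤ (1 + 2 * u + t ^ 2) ^ (p / 2) + C * t ^ (2 * (p / 2)))
    (ha : 0 < a) (hs : |s| ≤ a * b) :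
    a ^ p + p * a ^ (p - 2) * s + (1 - κ) * (p / 2 * a ^ (p - 2) * b ^ 2
      + p * (p - 2) / 2 * a ^ (p - 4) * s ^ 2) - C * b ^ p ≤ (a ^ 2 + 2 * s + b ^ 2) ^ (p / 2) := by
  obtain ⟨t, rfl⟩ : ∃ t, b = a * t := ⟨b / a, by field_simp⟩
  obtain ⟨u, rfl⟩ : ∃ u, s = a ^ 2 * u := ⟨s / a ^ 2, by field_simp⟩
  have hu : |u| ≤ t := by
    rw [abs_mul, abs_of_pos (pow_pos ha 2), ← mul_assoc, ← sq] at hs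
    exact le_of_mul_le_mul_left hs (by positivity)
  have ht : 0 ≤ t := (abs_nonneg u).trans hu
  have hbase : 0 ≤ 1 + 2 * u + t ^ 2 := by nlinarith [neg_abs_le u, sq_nonneg (t - 1)]
  have key := mul_le_mul_of_nonneg_left (hS t u hu) (rpow_nonneg ha.le p)
  rw [show 2 * (p / 2) = p by ring] at key
  have hp2 : a ^ (p - 2) * a ^ 2 = a ^ p := by rw [← rpow_natCast, ← rpow_add ha]; norm_num
  have hp4 : a ^ (p - 4) * a ^ 4 = a ^ p := by rw [← rpow_natCast, ← rpow_add ha]; norm_num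
  rw [show a ^ 2 + 2 * (a ^ 2 * u) + (a * t) ^ 2 = a ^ 2 * (1 + 2 * u + t ^ 2) by ring,
    mul_rpow (by positivity) hbase, sq_rpow_div_two ha.le, mul_rpow ha.le ht]
  linear_combination key + (p * u + (1 - κ) * (p / 2) * t ^ 2) * hp2
    + (1 - κ) * (p * (p - 2) / 2) * u ^ 2 * hp4

theorem div_two_mul_zero_rpow_mul_sq_le_rpow {p b : ℝ} (hp : 2 ≤ p) (hb : 0 ≤ b) :
    p / 2 * (0 : ℝ) ^ (p - 2) * b ^ 2 ≤ b ^ p := by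
  rcases hp.eq_or_lt with rfl | hp
  · norm_num
  · rw [zero_rpow (by linarith), mul_zero, zero_mul]; positivity

theorem stmt0_general (n : ℕ) (p κ : ℝ) (hp : 2 ≤ p) (hκ : 0 < κ) :
    ∃ C > 0, ∀ x y : EuclideanSpace ℝ (Fin n),
      ‖x + y‖ ^ p ≥ ‖x‖ ^ p + p * ‖x‖ ^ (p - 2) * ⟪x, y⟫_ℝ
        + (1 - κ) * ((p / 2) * ‖x‖ ^ (p - 2) * ‖y‖ ^ (2 : ℕ)
          + (p * (p - 2) / 2) * ‖x‖ ^ (p - 4) * ⟪x, y⟫_ℝ ^ (2 : ℕ))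
        - C * ‖y‖ ^ p := by
  obtain ⟨C, hC, hS⟩ :=
    exists_pos_quadratic_le_one_add_two_mul_add_sq_rpow_add (q := p / 2) (by linarith) hκ
  refine ⟨C, hC, fun x y ↦ ?_⟩
  rcases eq_or_ne x 0 with rfl | hx
  · have h0 := div_two_mul_zero_rpow_mul_sq_le_rpow hp (norm_nonneg y)
    have h0' : 0 ≤ p / 2 * (0 : ℝ) ^ (p - 2) * ‖y‖ ^ 2 := by positivity
    simp only [zero_add, norm_zero, inner_zero_left, zero_rpow (by linarith : p ≠ 0), mul_zero,
      add_zero, ne_eq, OfNat.ofNat_ne_zero, not_false_eq_true, zero_pow]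
    linarith [mul_nonneg hκ.le h0', mul_nonneg hC.le (rpow_nonneg (norm_nonneg y) p)]
  · have := quadratic_le_sq_add_two_mul_add_sq_rpow hS (norm_pos_iff.2 hx)
      (abs_real_inner_le_norm x y)
    rwa [← norm_add_sq_real, sq_rpow_div_two (norm_nonneg _)] at this

theorem stmt0 (n : ℕ) (hn : 2 ≤ n) (p κ : ℝ) (hp : 2 ≤ p) (hpn : p < n) (hκ : 0 < κ) :
    ∃ C > 0, ∀ x y : EuclideanSpace ℝ (Fin n),
      ‖x + y‖ ^ p ≥ ‖x‖ ^ p + p * ‖x‖ ^ (p - 2) * ⟪x, y⟫_ℝ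
        + (1 - κ) * ((p / 2) * ‖x‖ ^ (p - 2) * ‖y‖ ^ (2 : ℕ)
          + (p * (p - 2) / 2) * ‖x‖ ^ (p - 4) * ⟪x, y⟫_ℝ ^ (2 : ℕ))
        - C * ‖y‖ ^ p :=
  stmt0_general n p κ hp hκ
end

section
/- Let p ≥ 2 with p < n for some n > p, set p* = np/(n-p), and let κ > 0. There exists a constant C = C(p, n, κ) > 0 such that for all real numbers a, b, |a+b|^{p*} ≤ |a|^{p*} + p*|a|^{p*-2}ab + (p*(p*-1)/2 + κ)|a|^{p*-2}b² + C|b|^{p*}. -/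
/-!
Dividing by `|a|^q` reduces the inequality to the one-variable bound
`|1 + t|^q ≤ 1 + q t + Q t² + C |t|^q` with `t = b / a` and `Q = q(q-1)/2 + κ`.
Near `t = 0` it holds with `C = 0`: there `1 + q t + Q t² - (1 + t)^q` is convex, since its second
derivative `2Q - q(q-1)(1+t)^(q-2)` is positive at `0`, and it has a critical point at `0`,
hence a minimum.
For `|t| ≥ δ` the quadratic `1 + q t + Q t²` is nonnegative (its discriminant `q² - 4Q` is
negative when `q ≥ 2`) and `|1 + t| ≤ (1 + δ⁻¹) |t|`.
-/

open Real Filter Topology Metric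

theorem hasDerivAt_quadratic_sub_one_add_rpow {q s : ℝ} (Q : ℝ) (hs : 1 + s ≠ 0) :
    HasDerivAt (fun s => 1 + q * s + Q * s ^ 2 - (1 + s) ^ q)
      (q + 2 * Q * s - q * (1 + s) ^ (q - 1)) s := by
  have := ((((hasDerivAt_id s).const_mul q).const_add 1).add
    ((hasDerivAt_pow 2 s).const_mul Q)).sub
    (((hasDerivAt_id s).const_add 1).rpow_const (p := q) (Or.inl hs))
  exact this.congr_deriv (by simp only [id]; ring)

theorem hasDerivAt_linear_sub_mul_one_add_rpow {q s : ℝ} (Q : ℝ) (hs : 1 + s ≠ 0) :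
    HasDerivAt (fun s => q + 2 * Q * s - q * (1 + s) ^ (q - 1))
      (2 * Q - q * ((q - 1) * (1 + s) ^ (q - 2))) s := by
  have := (((hasDerivAt_id s).const_mul (2 * Q)).const_add q).sub
    ((((hasDerivAt_id s).const_add 1).rpow_const (p := q - 1) (Or.inl hs)).const_mul q)
  exact this.congr_deriv (by rw [sub_sub, one_add_one_eq_two]; simp only [id]; ring)

theorem eventually_abs_one_add_rpow_le {q Q : ℝ} (hQ : q * (q - 1) / 2 < Q) :
    ∀ᶠ t in 𝓝 0, |1 + t| ^ q ≤ 1 + q * t + Q * t ^ 2 := by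
  have hpos : ∀ᶠ s in 𝓝 (0 : ℝ), 0 < 1 + s := by
    filter_upwards [Ioi_mem_nhds (show (-1 : ℝ) < 0 by norm_num)] with s hs
    linarith [Set.mem_Ioi.1 hs]
  have hcurv : ∀ᶠ s in 𝓝 (0 : ℝ), q * ((q - 1) * (1 + s) ^ (q - 2)) < 2 * Q := by
    have hcont : ContinuousAt (fun s : ℝ => q * ((q - 1) * (1 + s) ^ (q - 2))) 0 :=
      continuousAt_const.mul (continuousAt_const.mul
        ((continuousAt_const.add continuousAt_id).rpow_const (Or.inl (by norm_num))))
    exact hcont.eventually_lt continuousAt_const (by norm_num; linarith)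
  obtain ⟨ε, hε, hball⟩ := Metric.eventually_nhds_iff_ball.1 (hpos.and hcurv)
  set g : ℝ → ℝ := fun s => 1 + q * s + Q * s ^ 2 - (1 + s) ^ q
  set g' : ℝ → ℝ := fun s => q + 2 * Q * s - q * (1 + s) ^ (q - 1)
  have hg : ∀ s ∈ ball (0 : ℝ) ε, HasDerivAt g (g' s) s := fun s hs =>
    hasDerivAt_quadratic_sub_one_add_rpow Q (hball s hs).1.ne'
  have hg' : ∀ s ∈ ball (0 : ℝ) ε,
      HasDerivAt g' (2 * Q - q * ((q - 1) * (1 + s) ^ (q - 2))) s := fun s hs =>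
    hasDerivAt_linear_sub_mul_one_add_rpow Q (hball s hs).1.ne'
  have hconvex : ConvexOn ℝ (ball (0 : ℝ) ε) g := by
    refine convexOn_of_hasDerivWithinAt2_nonneg (f' := g')
      (f'' := fun s => 2 * Q - q * ((q - 1) * (1 + s) ^ (q - 2))) (convex_ball 0 ε)
      (fun s hs => (hg s hs).continuousAt.continuousWithinAt) ?_ ?_ ?_ <;>
      rw [isOpen_ball.interior_eq]
    · exact fun s hs => (hg s hs).hasDerivWithinAt
    · exact fun s hs => (hg' s hs).hasDerivWithinAt
    · exact fun s hs => by linarith [(hball s hs).2]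
  have h0 : (0 : ℝ) ∈ ball (0 : ℝ) ε := mem_ball_self hε
  have hmin : IsMinOn g (ball 0 ε) 0 := by
    refine hconvex.isMinOn_of_rightDeriv_eq_zero (by rwa [isOpen_ball.interior_eq]) ?_
    rw [(hg 0 h0).hasDerivWithinAt.derivWithin (uniqueDiffWithinAt_Ioi 0)]
    simp [g']
  filter_upwards [ball_mem_nhds 0 hε] with t ht
  have := hmin ht
  simp only [g] at this
  rw [abs_of_pos (hball t ht).1]
  norm_num at this
  linarith

theorem one_add_mul_add_mul_sq_nonneg {q Q : ℝ} (hQ : q ^ 2 ≤ 4 * Q) (t : ℝ) :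
    0 ≤ 1 + q * t + Q * t ^ 2 := by
  nlinarith [sq_nonneg (2 + q * t), mul_nonneg (sub_nonneg.2 hQ) (sq_nonneg t)]

theorem exists_abs_one_add_rpow_le {q Q : ℝ} (hq : 0 ≤ q) (hQ : q * (q - 1) / 2 < Q)
    (hQ' : q ^ 2 ≤ 4 * Q) :
    ∃ C ≥ 1, ∀ t : ℝ, |1 + t| ^ q ≤ 1 + q * t + Q * t ^ 2 + C * |t| ^ q := by
  obtain ⟨δ, hδ, hnear⟩ := Metric.eventually_nhds_iff.1
    (eventually_abs_one_add_rpow_le hQ)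
  have hδ_inv : 0 < δ⁻¹ := inv_pos.2 hδ
  refine ⟨(1 + δ⁻¹) ^ q, one_le_rpow (by linarith) hq, fun t => ?_⟩
  have hC : 0 ≤ (1 + δ⁻¹) ^ q * |t| ^ q := by positivity
  rcases lt_or_ge |t| δ with ht | ht
  · have := hnear (by rwa [Real.dist_0_eq_abs])
    linarith
  · have hfar : |1 + t| ≤ (1 + δ⁻¹) * |t| := by
      have : 1 ≤ δ⁻¹ * |t| := (le_inv_mul_iff₀ hδ).2 (by linarith)
      calc |1 + t| ≤ |1| + |t| := abs_add_le 1 t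
        _ ≤ (1 + δ⁻¹) * |t| := by rw [abs_one]; linarith
    calc |1 + t| ^ q ≤ ((1 + δ⁻¹) * |t|) ^ q := rpow_le_rpow (abs_nonneg _) hfar hq
      _ = (1 + δ⁻¹) ^ q * |t| ^ q := mul_rpow (by positivity) (abs_nonneg _)
      _ ≤ _ := by linarith [one_add_mul_add_mul_sq_nonneg hQ' t]

theorem abs_rpow_sub_two_mul_sq {a : ℝ} (ha : a ≠ 0) (q : ℝ) :
    |a| ^ (q - 2) * a ^ 2 = |a| ^ q := by
  rw [← sq_abs, ← rpow_natCast, ← rpow_add (abs_pos.2 ha)]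
  norm_num

theorem abs_add_rpow_le_of_abs_one_add_rpow_le {q Q C : ℝ} (hq : 0 < q) (hQ : 0 ≤ Q)
    (hC : 1 ≤ C) (h : ∀ t : ℝ, |1 + t| ^ q ≤ 1 + q * t + Q * t ^ 2 + C * |t| ^ q)
    (a b : ℝ) :
    |a + b| ^ q ≤ |a| ^ q + q * |a| ^ (q - 2) * a * b + Q * |a| ^ (q - 2) * b ^ 2
      + C * |b| ^ q := by
  rcases eq_or_ne a 0 with rfl | ha
  · have hquad : 0 ≤ Q * (0 : ℝ) ^ (q - 2) * b ^ 2 := by positivity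
    have hb : |b| ^ q ≤ C * |b| ^ q := le_mul_of_one_le_left (by positivity) hC
    simp only [zero_add, abs_zero, zero_rpow hq.ne', mul_zero, zero_mul]
    linarith
  obtain ⟨t, rfl⟩ : ∃ t, b = a * t := ⟨b / a, by field_simp⟩
  calc |a + a * t| ^ q = |a| ^ q * |1 + t| ^ q := by
        rw [← mul_rpow (abs_nonneg _) (abs_nonneg _), ← abs_mul, mul_one_add]
    _ ≤ |a| ^ q * (1 + q * t + Q * t ^ 2 + C * |t| ^ q) :=
        mul_le_mul_of_nonneg_left (h t) (by positivity)
    _ = _ := by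
        rw [abs_mul, mul_rpow (abs_nonneg _) (abs_nonneg _)]
        linear_combination (-(q * t) - Q * t ^ 2) * abs_rpow_sub_two_mul_sq ha q

theorem stmt1 (n : ℕ) (p κ : ℝ) (hp : 2 ≤ p) (hpn : p < n) (hκ : 0 < κ)
    (q : ℝ) (hq : q = n * p / (n - p)) :
    ∃ C > 0, ∀ a b : ℝ,
      |a + b| ^ q ≤ |a| ^ q + q * |a| ^ (q - 2) * a * b
        + (q * (q - 1) / 2 + κ) * |a| ^ (q - 2) * b ^ (2 : ℕ)
        + C * |b| ^ q := by
  have hq2 : 2 ≤ q := by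
    rw [hq, le_div_iff₀ (by linarith)]
    nlinarith
  have hQ : q ^ 2 ≤ 4 * (q * (q - 1) / 2 + κ) := by nlinarith
  obtain ⟨C, hC, hineq⟩ := exists_abs_one_add_rpow_le (by linarith) (by linarith) hQ
  exact ⟨C, by linarith,
    abs_add_rpow_le_of_abs_one_add_rpow_le (by linarith) (by nlinarith) hC hineq⟩
end

section
/- Let 2 ≤ p < n. There exists a constant C = C(p, n) > 0 such that for all x, y ∈ ℝⁿ, |x+y|^p ≥ |x|^p + p|x|^{p-2}(x·y) − C|x|^{p-2}|y|² + |y|^p/2. -/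
open Real
open scoped InnerProductSpace

lemma tangent {p s t : ℝ} (hp : 1 ≤ p) (hs : 0 < s) (ht : 0 ≤ t) :
    s ^ p + p * s ^ (p - 1) * (t - s) ≤ t ^ p := by
  have h := one_add_mul_self_le_rpow_one_add
    (s := t / s - 1) (by have := div_nonneg ht hs.le; linarith) hp
  have h2 : (1 + (t / s - 1)) = t / s := by ring
  rw [h2, Real.div_rpow ht hs.le] at h
  have hsp : (0:ℝ) < s ^ p := Real.rpow_pos_of_pos hs p
  have h3 : s ^ p = s ^ (p - 1) * s := by
    rw [← Real.rpow_add_one hs.ne' (p-1)]; ring_nf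
  have := mul_le_mul_of_nonneg_left h hsp.le
  rw [mul_div_cancel₀ _ hsp.ne'] at this
  calc s ^ p + p * s ^ (p - 1) * (t - s)
      = s ^ p * (1 + p * (t / s - 1)) := by
        rw [h3]; field_simp
    _ ≤ t ^ p := this

lemma grad {n : ℕ} {p : ℝ} (hp : 2 ≤ p) (x y : EuclideanSpace ℝ (Fin n)) (hx : x ≠ 0) :
    ‖x‖ ^ p + p * ‖x‖ ^ (p - 2) * ⟪x, y⟫_ℝ ≤ ‖x + y‖ ^ p := by
  set s := ‖x‖ with hs'
  set t := ‖x + y‖ with ht'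
  have hs : 0 < s := norm_pos_iff.mpr hx
  have ht : 0 ≤ t := norm_nonneg _
  have htan := tangent (by linarith : (1:ℝ) ≤ p) hs ht
  have hcs : ⟪x, x + y⟫_ℝ ≤ s * t := real_inner_le_norm x (x + y)
  have hxx : ⟪x, x⟫_ℝ = s ^ (2:ℕ) := real_inner_self_eq_norm_sq x
  have hadd : ⟪x, x + y⟫_ℝ = ⟪x, x⟫_ℝ + ⟪x, y⟫_ℝ := inner_add_right x x y
  have hinner : ⟪x, y⟫_ℝ ≤ s * t - s ^ (2:ℕ) := by
    rw [hadd, hxx] at hcs; linarith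
  have hsp2 : (0:ℝ) < s ^ (p - 2) := Real.rpow_pos_of_pos hs _
  have ha1 : s ^ (p - 1) = s ^ (p - 2) * s := by
    rw [show p - 1 = p - 2 + 1 by ring, Real.rpow_add_one hs.ne']
  have ha2 : s ^ (p - 2) * s ^ (2:ℕ) = s ^ p := by
    rw [show (s ^ (2:ℕ) : ℝ) = s ^ ((2:ℕ):ℝ) from (Real.rpow_natCast s 2).symm]
    rw [← Real.rpow_add hs]; norm_num
  have key : s ^ (p - 2) * ⟪x, y⟫_ℝ ≤ s ^ (p - 1) * t - s ^ p := by
    have := mul_le_mul_of_nonneg_left hinner hsp2.le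
    rw [mul_sub, ha2, ← mul_assoc] at this
    rw [ha1]; linarith
  have hp0 : (0:ℝ) < p := by linarith
  have ha3 : s ^ (p - 1) * s = s ^ p := by
    rw [← Real.rpow_add_one hs.ne' (p-1)]; ring_nf
  have hmul : p * s ^ (p - 2) * ⟪x, y⟫_ℝ ≤ p * s ^ (p - 1) * (t - s) := by
    calc p * s ^ (p - 2) * ⟪x, y⟫_ℝ = p * (s ^ (p - 2) * ⟪x, y⟫_ℝ) := by ring
      _ ≤ p * (s ^ (p - 1) * t - s ^ p) := mul_le_mul_of_nonneg_left key hp0.le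
      _ = p * s ^ (p - 1) * (t - s) := by rw [← ha3]; ring
  linarith

set_option maxHeartbeats 1000000 in
theorem stmt2 (n : ℕ) (p : ℝ) (hp : 2 ≤ p) (hpn : p < n) :
    ∃ C > 0, ∀ x y : EuclideanSpace ℝ (Fin n),
      ‖x + y‖ ^ p ≥ ‖x‖ ^ p + p * ‖x‖ ^ (p - 2) * ⟪x, y⟫_ℝ
        - C * ‖x‖ ^ (p - 2) * ‖y‖ ^ (2 : ℕ) + ‖y‖ ^ p / 2 := by
  have hp0 : (0:ℝ) < p := by linarith
  have hp1 : (1:ℝ) ≤ p := by linarith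
  set δ : ℝ := 1 - (2:ℝ) ^ (-(1/p)) with hδdef
  have h2pos : (0:ℝ) < (2:ℝ) ^ (-(1/p)) := Real.rpow_pos_of_pos two_pos _
  have h2lt : (2:ℝ) ^ (-(1/p)) < 1 :=
    Real.rpow_lt_one_of_one_lt_of_neg one_lt_two (by rw [neg_neg_iff_pos]; positivity)
  have hδ : 0 < δ := by simp only [hδdef]; linarith
  have hδp : (0:ℝ) < δ ^ (2 - p) := Real.rpow_pos_of_pos hδ _
  refine ⟨2 + p + δ ^ (2 - p), by positivity, ?_⟩
  intro x y
  rcases eq_or_ne x 0 with rfl | hx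
  · have h0 : ‖(0 : EuclideanSpace ℝ (Fin n))‖ = 0 := norm_zero
    have h0p : (0:ℝ) ^ p = 0 := Real.zero_rpow hp0.ne'
    have h0p2 : (0:ℝ) ≤ (0:ℝ) ^ (p - 2) := Real.rpow_nonneg le_rfl _
    have hy : (0:ℝ) ≤ ‖y‖ ^ p := Real.rpow_nonneg (norm_nonneg y) _
    have hin : ⟪(0 : EuclideanSpace ℝ (Fin n)), y⟫_ℝ = 0 := inner_zero_left y
    rw [zero_add, h0, hin, h0p]
    have hy2 : (0:ℝ) ≤ ‖y‖ ^ (2:ℕ) := by positivity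
    nlinarith [mul_nonneg (mul_nonneg (by positivity : (0:ℝ) ≤ 2 + p + δ ^ (2-p)) h0p2) hy2]
  · set a := ‖x‖ with ha'
    set b := ‖y‖ with hb'
    have ha : 0 < a := norm_pos_iff.mpr hx
    have hb : 0 ≤ b := norm_nonneg y
    have hap2 : (0:ℝ) < a ^ (p - 2) := Real.rpow_pos_of_pos ha _
    have hb2 : (0:ℝ) ≤ b ^ (2:ℕ) := by positivity
    have ha2 : a ^ (p - 2) * a ^ (2:ℕ) = a ^ p := by
      rw [show (a ^ (2:ℕ) : ℝ) = a ^ ((2:ℕ):ℝ) from (Real.rpow_natCast a 2).symm]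
      rw [← Real.rpow_add ha]; norm_num
    by_cases hba : b ≤ a
    · -- small y: convexity gradient inequality
      have hgrad := grad hp x y hx
      have hbp : b ^ p ≤ a ^ (p - 2) * b ^ (2:ℕ) := by
        rcases eq_or_lt_of_le hb with hb0 | hb0
        · rw [← hb0, Real.zero_rpow hp0.ne']
          positivity
        · have hbb2 : b ^ (p - 2) * b ^ (2:ℕ) = b ^ p := by
            rw [show (b ^ (2:ℕ) : ℝ) = b ^ ((2:ℕ):ℝ) from (Real.rpow_natCast b 2).symm]
            rw [← Real.rpow_add hb0]; norm_num
          rw [← hbb2]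
          have : b ^ (p - 2) ≤ a ^ (p - 2) :=
            Real.rpow_le_rpow hb hba (by linarith)
          nlinarith
      nlinarith [mul_pos hap2 (by positivity : (0:ℝ) < (2:ℝ) + p + δ ^ (2 - p)),
        mul_nonneg (mul_nonneg (by positivity : (0:ℝ) ≤ (1:ℝ) + p + δ ^ (2 - p)) hap2.le) hb2]
    · push_neg at hba
      have hcs : ⟪x, y⟫_ℝ ≤ a * b := real_inner_le_norm x y
      have hinb : p * a ^ (p - 2) * ⟪x, y⟫_ℝ ≤ p * (a ^ (p - 2) * b ^ (2:ℕ)) := by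
        have h1 : a ^ (p - 2) * ⟪x, y⟫_ℝ ≤ a ^ (p - 2) * (a * b) :=
          mul_le_mul_of_nonneg_left hcs hap2.le
        have h2 : a * b ≤ b ^ (2:ℕ) := by nlinarith
        have h3 : a ^ (p - 2) * (a * b) ≤ a ^ (p - 2) * b ^ (2:ℕ) :=
          mul_le_mul_of_nonneg_left h2 hap2.le
        nlinarith
      have hap : a ^ p ≤ a ^ (p - 2) * b ^ (2:ℕ) := by
        rw [← ha2]
        have : (a:ℝ) ^ (2:ℕ) ≤ b ^ (2:ℕ) := by nlinarith
        nlinarith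
      by_cases hsub : a ≤ δ * b
      · -- x much smaller: ‖x+y‖ ≥ 2^{-1/p} b
        have hxy : (2:ℝ) ^ (-(1/p)) * b ≤ ‖x + y‖ := by
          have h1 : b ≤ ‖x + y‖ + a := by
            calc b = ‖(x + y) - x‖ := by rw [add_sub_cancel_left]
              _ ≤ ‖x + y‖ + ‖x‖ := norm_sub_le _ _
          have hsub' : a ≤ b - (2:ℝ) ^ (-(1/p)) * b := by
            have h := hsub
            rw [hδdef, sub_mul, one_mul] at h
            exact h
          linarith
        have hpow : ((2:ℝ) ^ (-(1/p)) * b) ^ p = b ^ p / 2 := by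
          rw [Real.mul_rpow h2pos.le hb,
            ← Real.rpow_mul (by norm_num : (0:ℝ) ≤ 2),
            show -(1/p) * p = -1 by field_simp, Real.rpow_neg_one]
          ring
        have hxyp : b ^ p / 2 ≤ ‖x + y‖ ^ p := by
          rw [← hpow]
          exact Real.rpow_le_rpow (by positivity) hxy hp0.le
        nlinarith [mul_nonneg hap2.le hb2, mul_nonneg hδp.le (mul_nonneg hap2.le hb2)]
      · -- comparable: δ b < a < b
        push_neg at hsub
        have hxy0 : (0:ℝ) ≤ ‖x + y‖ ^ p := Real.rpow_nonneg (norm_nonneg _) _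
        have hbp : b ^ p ≤ δ ^ (2 - p) * (a ^ (p - 2) * b ^ (2:ℕ)) := by
          have hb0 : 0 < b := lt_trans ha hba
          have hbb2 : b ^ (p - 2) * b ^ (2:ℕ) = b ^ p := by
            rw [show (b ^ (2:ℕ) : ℝ) = b ^ ((2:ℕ):ℝ) from (Real.rpow_natCast b 2).symm]
            rw [← Real.rpow_add hb0]; norm_num
          have hble : b ≤ a / δ := by
            rw [le_div_iff₀ hδ]; nlinarith
          have h1 : b ^ (p - 2) ≤ (a / δ) ^ (p - 2) :=
            Real.rpow_le_rpow hb hble (by linarith)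
          have h2 : (a / δ) ^ (p - 2) = δ ^ (2 - p) * a ^ (p - 2) := by
            rw [Real.div_rpow ha.le hδ.le, show (2:ℝ) - p = -(p - 2) by ring,
              Real.rpow_neg hδ.le]
            field_simp
          rw [← hbb2]
          nlinarith [Real.rpow_pos_of_pos ha (p-2)]
        nlinarith [mul_nonneg hap2.le hb2]
end

section
/- Let q > 2 be a real number. There exists a constant C = C(q) > 0 such that for all real numbers a, b, |a+b|^q ≤ |a|^q + q|a|^{q-2}ab + C|a|^{q-2}b² + 2|b|^q. -/
/-! By homogeneity it suffices to take `a = 1`, `b = t`. The tangent-line inequality for the convex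
function `x ↦ x ^ p`, applied to the exponents `q` and `q - 1`, gives a second-order Taylor bound
`(1 + t) ^ q ≤ 1 + q t + O(t²)` on every bounded range of `t > -1`. Outside such a range the term
`2 |t| ^ q` takes over: for `t ≤ -1/2` we have `|1 + t| ≤ |t|`, and for large `t > 0` the tangent
inequality once more gives `(1 + t) ^ q ≤ 2 t ^ q`. -/

open Real

namespace Real

theorem rpow_le_rpow_add_mul_rpow_sub_one_mul {p x y : ℝ} (hp : 1 ≤ p) (hx : 0 ≤ x) (hy : 0 < y) :
    y ^ p ≤ x ^ p + p * y ^ (p - 1) * (y - x) := by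
  have hbern :=
    one_add_mul_self_le_rpow_one_add (by linarith [div_nonneg hx hy.le] : -1 ≤ x / y - 1) hp
  rw [add_sub_cancel, div_rpow hx hy.le, le_div_iff₀ (rpow_pos_of_pos hy p)] at hbern
  have hsplit : y ^ p = y ^ (p - 1) * y := by rw [← rpow_add_one hy.ne', sub_add_cancel]
  have : (1 + p * (x / y - 1)) * y ^ p = y ^ p - p * y ^ (p - 1) * (y - x) := by
    rw [hsplit]; field_simp; ring
  linarith

theorem one_add_rpow_le_of_two_le {p t : ℝ} (hp : 2 ≤ p) (ht : -1 < t) :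
    (1 + t) ^ p ≤ 1 + p * t + p * (p - 1) * max 1 (1 + t) ^ (p - 2) * t ^ 2 := by
  have h1t : 0 < 1 + t := by linarith
  have htan := rpow_le_rpow_add_mul_rpow_sub_one_mul (by linarith) zero_le_one h1t (p := p)
  rw [one_rpow, add_sub_cancel_left] at htan
  suffices p * t * ((1 + t) ^ (p - 1) - 1) ≤ p * (p - 1) * max 1 (1 + t) ^ (p - 2) * t ^ 2 by
    nlinarith
  rcases le_or_gt 0 t with ht0 | ht0
  · have h := rpow_le_rpow_add_mul_rpow_sub_one_mul (p := p - 1) (by linarith) zero_le_one h1t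
    rw [one_rpow, add_sub_cancel_left, show p - 1 - 1 = p - 2 by ring] at h
    have hle : (1 + t) ^ (p - 2) ≤ max 1 (1 + t) ^ (p - 2) :=
      rpow_le_rpow h1t.le (le_max_right _ _) (by linarith)
    have hpt : 0 ≤ p * t := by positivity
    calc p * t * ((1 + t) ^ (p - 1) - 1) ≤ p * t * ((p - 1) * (1 + t) ^ (p - 2) * t) :=
          mul_le_mul_of_nonneg_left (by linarith) hpt
      _ ≤ p * t * ((p - 1) * max 1 (1 + t) ^ (p - 2) * t) := by gcongr; linarith
      _ = _ := by ring
  · have h := rpow_le_rpow_add_mul_rpow_sub_one_mul (p := p - 1) (by linarith) h1t.le one_pos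
    rw [one_rpow, one_rpow, mul_one] at h
    have hpt : p * t ≤ 0 := mul_nonpos_of_nonneg_of_nonpos (by linarith) ht0.le
    calc p * t * ((1 + t) ^ (p - 1) - 1) ≤ p * t * ((p - 1) * t) :=
          mul_le_mul_of_nonpos_left (by linarith) hpt
      _ = p * (p - 1) * 1 * t ^ 2 := by ring
      _ ≤ _ := by
        have hmax : 1 ≤ max 1 (1 + t) ^ (p - 2) := one_le_rpow (le_max_left _ _) (by linarith)
        have hp0 : 0 ≤ p * (p - 1) := by nlinarith
        gcongr

theorem one_add_rpow_le_two_mul_rpow {p t : ℝ} (hp : 1 ≤ p) (ht : p * 2 ^ (p - 1) ≤ t) :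
    (1 + t) ^ p ≤ 2 * t ^ p := by
  have h1 : 1 ≤ t := le_trans (by nlinarith [one_le_rpow one_le_two (by linarith : 0 ≤ p - 1)]) ht
  have ht0 : 0 < t := by linarith
  have htan := rpow_le_rpow_add_mul_rpow_sub_one_mul hp ht0.le (by linarith : 0 < 1 + t)
  rw [add_sub_cancel_right, mul_one] at htan
  have hle : (1 + t) ^ (p - 1) ≤ 2 ^ (p - 1) * t ^ (p - 1) := by
    rw [← mul_rpow zero_le_two ht0.le]
    exact rpow_le_rpow (by linarith) (by linarith) (by linarith)
  calc (1 + t) ^ p ≤ t ^ p + p * (1 + t) ^ (p - 1) := htan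
    _ ≤ t ^ p + p * 2 ^ (p - 1) * t ^ (p - 1) := by rw [mul_assoc]; gcongr
    _ ≤ t ^ p + t * t ^ (p - 1) := by gcongr
    _ = 2 * t ^ p := by rw [← rpow_one_add' ht0.le (by linarith), add_sub_cancel]; ring

theorem exists_abs_one_add_rpow_le {q : ℝ} (hq : 2 ≤ q) :
    ∃ C > 0, ∀ t : ℝ, |1 + t| ^ q ≤ 1 + q * t + C * t ^ 2 + 2 * |t| ^ q := by
  set M := q * 2 ^ (q - 1)
  set K := q * (q - 1) * (1 + M) ^ (q - 2)
  have hM : 0 ≤ M := mul_nonneg (by linarith) (rpow_nonneg zero_le_two _)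
  have hK : 0 ≤ K := mul_nonneg (by nlinarith) (rpow_nonneg (by linarith) _)
  refine ⟨K + 2 * q, by linarith, fun t => ?_⟩
  have habs : 0 ≤ |t| ^ q := rpow_nonneg (abs_nonneg t) q
  rcases le_or_gt t (-1 / 2) with hneg | hneg
  · have hle : |1 + t| ≤ |t| := by
      rw [abs_of_neg (by linarith : t < 0)]; exact abs_le.mpr ⟨by linarith, by linarith⟩
    have hpos : 0 ≤ 1 + q * t + (K + 2 * q) * t ^ 2 := by
      nlinarith [mul_nonneg hK (sq_nonneg t),
        mul_nonneg_of_nonpos_of_nonpos (by nlinarith : q * t ≤ 0) (by linarith : 2 * t + 1 ≤ 0)]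
    linarith [rpow_le_rpow (abs_nonneg _) hle (by linarith : 0 ≤ q)]
  rw [abs_of_pos (by linarith : 0 < 1 + t)]
  rcases le_or_gt t M with htM | htM
  · have hmax : max 1 (1 + t) ^ (q - 2) ≤ (1 + M) ^ (q - 2) :=
      rpow_le_rpow (by positivity) (max_le (by linarith) (by linarith)) (by linarith)
    have := one_add_rpow_le_of_two_le hq (by linarith : -1 < t)
    nlinarith [mul_le_mul_of_nonneg_left hmax
      (mul_nonneg (mul_nonneg (by linarith : 0 ≤ q) (by linarith : 0 ≤ q - 1)) (sq_nonneg t))]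
  · have ht0 : 0 < t := lt_of_le_of_lt hM htM
    rw [abs_of_pos ht0]
    have := one_add_rpow_le_two_mul_rpow (by linarith) htM.le
    nlinarith

theorem abs_add_rpow_le_of_forall_one_add {q C : ℝ} (hC : 0 ≤ C)
    (h : ∀ t : ℝ, |1 + t| ^ q ≤ 1 + q * t + C * t ^ 2 + 2 * |t| ^ q) (a b : ℝ) :
    |a + b| ^ q ≤ |a| ^ q + q * |a| ^ (q - 2) * a * b
      + C * |a| ^ (q - 2) * b ^ (2 : ℕ) + 2 * |b| ^ q := by
  rcases eq_or_ne a 0 with rfl | ha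
  · have h0 : 0 ≤ |(0 : ℝ)| ^ q := rpow_nonneg (abs_nonneg 0) _
    have h2 : 0 ≤ |(0 : ℝ)| ^ (q - 2) := rpow_nonneg (abs_nonneg 0) _
    have hb : 0 ≤ |b| ^ q := rpow_nonneg (abs_nonneg b) _
    simp only [zero_add, mul_zero, zero_mul, add_zero]
    nlinarith [mul_nonneg (mul_nonneg hC h2) (sq_nonneg b)]
  obtain ⟨t, rfl⟩ : ∃ t, b = a * t := ⟨b / a, by field_simp⟩
  have haa : 0 < |a| := abs_pos.mpr ha
  have hsq : |a| ^ q = |a| ^ (q - 2) * a ^ 2 := by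
    rw [← sq_abs, ← rpow_natCast, ← rpow_add haa]; norm_num
  calc |a + a * t| ^ q = |a| ^ q * |1 + t| ^ q := by
        rw [← mul_rpow (abs_nonneg a) (abs_nonneg _), ← abs_mul, mul_add, mul_one]
    _ ≤ |a| ^ q * (1 + q * t + C * t ^ 2 + 2 * |t| ^ q) :=
        mul_le_mul_of_nonneg_left (h t) (rpow_nonneg haa.le _)
    _ = _ := by rw [abs_mul, mul_rpow haa.le (abs_nonneg t), hsq]; ring

end Real

theorem stmt3 (q : ℝ) (hq : 2 < q) :
    ∃ C > 0, ∀ a b : ℝ,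
      |a + b| ^ q ≤ |a| ^ q + q * |a| ^ (q - 2) * a * b
        + C * |a| ^ (q - 2) * b ^ (2 : ℕ) + 2 * |b| ^ q := by
  obtain ⟨C, hC, h⟩ := Real.exists_abs_one_add_rpow_le hq.le
  exact ⟨C, hC, Real.abs_add_rpow_le_of_forall_one_add hC.le h⟩
end

section
/- Let q > 2 and κ > 0. There exists a constant C = C(q, κ) > 0 such that for all real numbers a, b, |a+b|^q ≥ |a|^q + q|a|^{q-2}ab − (q(q-1)/2 + κ)|a|^{q-2}b² − C|b|^q. -/
open Real

/-- Scalar tangent-line inequality: `|1+s|^q ≥ 1 + q s` for `q ≥ 1`. -/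
lemma aux_one_add (q : ℝ) (hq : 1 ≤ q) (s : ℝ) : 1 + q * s ≤ |1 + s| ^ q := by
  rcases le_or_gt (-1) s with hs | hs
  · have h1 : (0:ℝ) ≤ 1 + s := by linarith
    rw [abs_of_nonneg h1]
    exact one_add_mul_self_le_rpow_one_add hs hq
  · have h2 : 1 + q * s ≤ 0 := by nlinarith
    exact h2.trans (Real.rpow_nonneg (abs_nonneg _) q)

/-- Tangent-line inequality for `|x|^q`. -/
lemma aux_tangent (q : ℝ) (hq : 1 ≤ q) (a b : ℝ) :
    |a| ^ q + q * |a| ^ (q - 2) * a * b ≤ |a + b| ^ q := by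
  rcases eq_or_ne a 0 with rfl | ha
  · simp only [abs_zero, mul_zero, zero_mul]
    have : (0:ℝ) ^ q = 0 := Real.zero_rpow (by linarith)
    rw [this]
    simpa using Real.rpow_nonneg (abs_nonneg (0 + b)) q
  · have ha' : (0:ℝ) < |a| := abs_pos.mpr ha
    have key := aux_one_add q hq (b / a)
    have hmul : |a| ^ q * (1 + q * (b / a)) ≤ |a| ^ q * |1 + b / a| ^ q :=
      mul_le_mul_of_nonneg_left key (Real.rpow_nonneg (abs_nonneg a) q)
    have h1 : |a| ^ q * |1 + b / a| ^ q = |a + b| ^ q := by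
      rw [← Real.mul_rpow (abs_nonneg _) (abs_nonneg _), ← abs_mul]
      congr 2
      field_simp
    have h2 : |a| ^ q * (1 + q * (b / a)) = |a| ^ q + q * |a| ^ (q - 2) * a * b := by
      have hpow : |a| ^ q = |a| ^ (q - 2) * a ^ 2 := by
        rw [← sq_abs, ← Real.rpow_two, ← Real.rpow_add ha']
        ring_nf
      rw [mul_add, mul_one]
      congr 1
      rw [hpow]
      field_simp
    rw [h1, h2] at hmul
    exact hmul

theorem stmt4 (q κ : ℝ) (hq : 2 < q) (hκ : 0 < κ) :
    ∃ C > 0, ∀ a b : ℝ,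
      |a + b| ^ q ≥ |a| ^ q + q * |a| ^ (q - 2) * a * b
        - (q * (q - 1) / 2 + κ) * |a| ^ (q - 2) * b ^ (2 : ℕ) - C * |b| ^ q := by
  refine ⟨1, one_pos, fun a b => ?_⟩
  have h1 := aux_tangent q (by linarith) a b
  have h2 : 0 ≤ (q * (q - 1) / 2 + κ) * |a| ^ (q - 2) * b ^ (2 : ℕ) := by
    have : 0 ≤ |a| ^ (q - 2) := Real.rpow_nonneg (abs_nonneg a) _
    have hb : (0:ℝ) ≤ b ^ (2 : ℕ) := sq_nonneg b
    have : 0 ≤ q * (q - 1) / 2 + κ := by nlinarith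
    positivity
  have h3 : 0 ≤ 1 * |b| ^ q := by
    rw [one_mul]; exact Real.rpow_nonneg (abs_nonneg b) q
  linarith
end

section
/- Let n ≥ 2, 2 ≤ p < n, p' = p/(p-1), p* = np/(n-p), and v(x) = κ₀(1+|x|^{p'})^{-(n-p)/p}. There exists C = C(n, p, κ₀) > 0 such that for every k ≥ 2 and every u ∈ C_c^∞(ℝⁿ \ B_k), ∫_{ℝⁿ} v^{p*-2} u² dx ≤ C k^{-p'} ∫_{ℝⁿ} |∇v|^{p-2} |∇u|² dx. -/
open Real MeasureTheory

/-- The Aubin–Talenti extremal function `v(x) = κ₀ (1 + |x|^{p'})^{-(n-p)/p}`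
with `p' = p/(p-1)`. -/
noncomputable def aubinTalenti (n : ℕ) (p κ₀ : ℝ) (x : EuclideanSpace ℝ (Fin n)) : ℝ :=
  κ₀ * (1 + ‖x‖ ^ (p / (p - 1))) ^ (-((n : ℝ) - p) / p)

namespace Stmt18Aux

variable {n : ℕ}

local notation "E" => EuclideanSpace ℝ (Fin n)

lemma continuous_helper {f : E → ℝ} (h0 : ∀ x : E, ‖x‖ < 2 → f x = 0)
    (hc : ∀ x : E, x ≠ 0 → ContinuousAt f x) : Continuous f := by
  rw [continuous_iff_continuousAt]
  intro x
  by_cases hx : ‖x‖ < 2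
  · have hev : f =ᶠ[nhds x] (fun _ => (0 : ℝ)) := by
      filter_upwards [(isOpen_lt continuous_norm continuous_const).mem_nhds hx] with y hy
      exact h0 y hy
    exact hev.continuousAt
  · push_neg at hx
    refine hc x ?_
    rintro rfl
    simp at hx
    linarith

lemma hcs_helper {u : E → ℝ} {f : E → ℝ} (h2u : HasCompactSupport u)
    (hs : Function.support f ⊆ tsupport u) : HasCompactSupport f :=
  IsCompact.of_isClosed_subset h2u (isClosed_closure)
    (closure_minimal hs (isClosed_tsupport u))

lemma integral_lineDeriv_eq_zero {f : E → ℝ} {C : NNReal} (hf : LipschitzWith C f)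
    (h'f : HasCompactSupport f) (v : E) :
    ∫ x : E, lineDeriv ℝ f x v = 0 := by
  have h := LipschitzWith.integral_lineDeriv_mul_eq (μ := (volume : Measure E))
      (LipschitzWith.const (1 : ℝ)) hf h'f (-v)
  have hc : ∀ x : E, lineDeriv ℝ (fun _ : E => (1 : ℝ)) x (-v) = 0 := by
    intro x; simp [lineDeriv]
  simp only [hc, zero_mul, integral_zero, neg_neg, mul_one] at h
  exact h.symm

/-- derivative of `‖·‖^a` at `x ≠ 0`. -/
lemma hasFDerivAt_rpow_norm {x : E} (hx : x ≠ 0) (a : ℝ) :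
    HasFDerivAt (fun y : E => ‖y‖ ^ a) ((a * ‖x‖ ^ (a - 2)) • innerSL ℝ x) x := by
  have hxx : (0 : ℝ) < ‖x‖ := norm_pos_iff.mpr hx
  have hx2 : (‖x‖ : ℝ) ^ (2 : ℝ) ≠ 0 := ne_of_gt (Real.rpow_pos_of_pos hxx _)
  have hN : HasFDerivAt (fun y : E => ‖y‖ ^ (2 : ℝ))
      (((2 : ℝ) * ‖x‖ ^ ((2 : ℝ) - 2)) • innerSL ℝ x) x := hasFDerivAt_norm_rpow x one_lt_two
  have hφ : HasDerivAt (fun c : ℝ => c ^ (a / 2))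
      ((a / 2) * (‖x‖ ^ (2 : ℝ)) ^ (a / 2 - 1)) (‖x‖ ^ (2 : ℝ)) :=
    Real.hasDerivAt_rpow_const (Or.inl hx2)
  have hcomp := hφ.comp_hasFDerivAt x hN
  have hfun : (fun y : E => (‖y‖ ^ (2 : ℝ)) ^ (a / 2)) = fun y : E => ‖y‖ ^ a := by
    funext y
    rw [← Real.rpow_mul (norm_nonneg y)]
    congr 1
    ring
  have hcomp' : HasFDerivAt (fun y : E => ‖y‖ ^ a)
      ((a / 2 * (‖x‖ ^ (2:ℝ)) ^ (a / 2 - 1)) • ((2 : ℝ) * ‖x‖ ^ ((2:ℝ) - 2)) • innerSL ℝ x) x := by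
    rw [← hfun]
    exact hcomp
  convert hcomp' using 1
  rw [smul_smul]
  congr 1
  have h1 : ((2:ℝ) - 2) = 0 := by norm_num
  have h2 : (‖x‖ ^ (2:ℝ)) ^ (a/2 - 1) = ‖x‖ ^ (a - 2) := by
    rw [← Real.rpow_mul (norm_nonneg x)]
    congr 1
    ring
  rw [h1, Real.rpow_zero, mul_one, h2]
  ring

lemma sum_single_smul (x : E) :
    ∑ i : Fin n, x i • EuclideanSpace.single i (1 : ℝ) = x := by
  have h := (EuclideanSpace.basisFun (Fin n) ℝ).sum_repr x
  simpa [EuclideanSpace.basisFun_repr, EuclideanSpace.basisFun_apply] using h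


lemma hardy (t : ℝ) (hnt : 0 < (n : ℝ) + t)
    (u : E → ℝ) (hu : ContDiff ℝ (⊤ : ℕ∞) u) (h2u : HasCompactSupport u)
    (hsupp : ∀ x : E, x ∈ tsupport u → (2 : ℝ) ≤ ‖x‖) :
    ∫ x : E, ‖x‖ ^ t * u x ^ (2 : ℕ)
      ≤ (2 / ((n : ℝ) + t)) ^ (2 : ℕ) * ∫ x : E, ‖x‖ ^ (t + 2) * ‖gradient u x‖ ^ (2 : ℕ) := by
  classical
  set c : ℝ := (n : ℝ) + t with hcdef
  have hu1 : ContDiff ℝ 1 u := hu.of_le (by simp)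
  have hudiff : Differentiable ℝ u := hu1.differentiable one_ne_zero
  have hu0 : ∀ x : E, ‖x‖ < 2 → u x = 0 := fun x hx =>
    image_eq_zero_of_notMem_tsupport (fun hm => by have := hsupp x hm; linarith)
  have hnotsupp : ∀ x : E, x ∉ tsupport u → u =ᶠ[nhds x] 0 := fun x hx =>
    notMem_tsupport_iff_eventuallyEq.mp hx
  have hfderivu0 : ∀ x : E, x ∉ tsupport u → fderiv ℝ u x = 0 := by
    intro x hx
    rw [(hnotsupp x hx).fderiv_eq]
    exact fderiv_const_apply 0
  have hgradnorm : ∀ (f : E → ℝ) (x : E), ‖gradient f x‖ = ‖fderiv ℝ f x‖ := fun f x =>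
    LinearIsometryEquiv.norm_map _ _
  have hgradu0 : ∀ x : E, x ∉ tsupport u → ‖gradient u x‖ = 0 := by
    intro x hx
    rw [hgradnorm, hfderivu0 x hx, norm_zero]
  have hmem2 : ∀ x : E, x ∈ tsupport u → (0 : ℝ) < ‖x‖ := fun x hx => by
    have := hsupp x hx; linarith
  set ρ : E → ℝ := fun x => ‖x‖ ^ t * u x ^ (2 : ℕ) with hρdef
  set H : E → ℝ := fun x => ‖x‖ ^ (t + 2) * ‖gradient u x‖ ^ (2 : ℕ) with hHdef
  set G : E → ℝ := fun x => ‖x‖ ^ t * u x * fderiv ℝ u x x with hGdef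
  set w : Fin n → E → ℝ := fun i x => (‖x‖ ^ t * u x ^ (2 : ℕ)) * x i with hwdef
  have hwC1 : ∀ i, ContDiff ℝ 1 (w i) := by
    intro i
    rw [contDiff_iff_contDiffAt]
    intro x
    by_cases hx : ‖x‖ < 2
    · have hev : w i =ᶠ[nhds x] (fun _ => (0 : ℝ)) := by
        filter_upwards [(isOpen_lt continuous_norm continuous_const).mem_nhds hx] with y hy
        simp [hwdef, hu0 y hy]
      exact (contDiffAt_const (c := (0 : ℝ))).congr_of_eventuallyEq hev
    · push_neg at hx
      have hx0 : x ≠ 0 := by rintro rfl; simp at hx; linarith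
      have h1 : ContDiffAt ℝ 1 (fun y : E => ‖y‖ ^ t) x :=
        (contDiffAt_norm (𝕜 := ℝ) hx0).rpow_const_of_ne (norm_ne_zero_iff.mpr hx0)
      have h2 : ContDiffAt ℝ 1 (fun y : E => u y ^ (2 : ℕ)) x := hu1.contDiffAt.pow 2
      have h3 : ContDiffAt ℝ 1 (fun y : E => y i) x :=
        (EuclideanSpace.proj i : EuclideanSpace ℝ (Fin n) →L[ℝ] ℝ).contDiff.contDiffAt
      exact (h1.mul h2).mul h3
  have hwdiff : ∀ i, Differentiable ℝ (w i) := fun i => (hwC1 i).differentiable one_ne_zero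
  have hwcs : ∀ i, HasCompactSupport (w i) := by
    intro i
    refine hcs_helper h2u ?_
    intro x hx
    by_contra hxx
    exact hx (by simp [hwdef, image_eq_zero_of_notMem_tsupport hxx])
  -- pointwise divergence identity
  have hkey : ∀ x : E, ∑ i, fderiv ℝ (w i) x (EuclideanSpace.single i (1 : ℝ))
      = c * ρ x + 2 * G x := by
    intro x
    by_cases hx : ‖x‖ < 2
    · have hxnot : x ∉ tsupport u := fun hm => by have := hsupp x hm; linarith
      have hz : ∀ i, fderiv ℝ (w i) x = 0 := by
        intro i
        have hev : w i =ᶠ[nhds x] (fun _ => (0 : ℝ)) := by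
          filter_upwards [(isOpen_lt continuous_norm continuous_const).mem_nhds hx] with y hy
          simp [hwdef, hu0 y hy]
        rw [hev.fderiv_eq]
        exact fderiv_const_apply 0
      simp [hz, hρdef, hGdef, hu0 x hx]
    · push_neg at hx
      have hx0 : x ≠ 0 := by rintro rfl; simp at hx; linarith
      have hxx : (0 : ℝ) < ‖x‖ := norm_pos_iff.mpr hx0
      have hN : HasFDerivAt (fun y : E => ‖y‖ ^ t) ((t * ‖x‖ ^ (t - 2)) • innerSL ℝ x) x :=
        hasFDerivAt_rpow_norm hx0 t
      have hU : HasFDerivAt (fun y : E => u y ^ (2 : ℕ))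
          ((2 * u x) • fderiv ℝ u x) x := by
        have h := ((hudiff x).hasFDerivAt).mul ((hudiff x).hasFDerivAt)
        have heq : (u * u) = fun y : E => u y ^ (2 : ℕ) := by
          funext y; rw [Pi.mul_apply]; ring
        rw [heq] at h
        refine h.congr_fderiv ?_
        rw [two_mul, add_smul]
      set Lρ : EuclideanSpace ℝ (Fin n) →L[ℝ] ℝ :=
        (‖x‖ ^ t) • ((2 * u x) • fderiv ℝ u x)
          + (u x ^ (2 : ℕ)) • ((t * ‖x‖ ^ (t - 2)) • innerSL ℝ x) with hLρ
      have hρ' : HasFDerivAt (fun y : E => ‖y‖ ^ t * u y ^ (2 : ℕ)) Lρ x := hN.mul hU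
      have hwd : ∀ i, fderiv ℝ (w i) x
          = (‖x‖ ^ t * u x ^ (2 : ℕ)) • (EuclideanSpace.proj i : EuclideanSpace ℝ (Fin n) →L[ℝ] ℝ)
            + (x i) • Lρ := by
        intro i
        have hproj : HasFDerivAt (fun y : E => y i)
            (EuclideanSpace.proj i : EuclideanSpace ℝ (Fin n) →L[ℝ] ℝ) x :=
          (EuclideanSpace.proj i : EuclideanSpace ℝ (Fin n) →L[ℝ] ℝ).hasFDerivAt
        exact (hρ'.mul hproj).fderiv
      have hsingle : ∀ i : Fin n, (EuclideanSpace.single i (1 : ℝ)) i = 1 := by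
        intro i; simp [EuclideanSpace.single_apply]
      have hsum : ∑ i, fderiv ℝ (w i) x (EuclideanSpace.single i (1 : ℝ))
          = (∑ i : Fin n, (‖x‖ ^ t * u x ^ (2 : ℕ)))
            + ∑ i, (x i) * Lρ (EuclideanSpace.single i (1 : ℝ)) := by
        rw [← Finset.sum_add_distrib]
        refine Finset.sum_congr rfl fun i _ => ?_
        rw [hwd i]
        simp [smul_eq_mul, hsingle i]
      have hsum2 : ∑ i, (x i) * Lρ (EuclideanSpace.single i (1 : ℝ)) = Lρ x := by
        have h : Lρ x = ∑ i, (x i) * Lρ (EuclideanSpace.single i (1 : ℝ)) := by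
          conv_lhs => rw [← sum_single_smul x]
          rw [map_sum]
          refine Finset.sum_congr rfl fun i _ => ?_
          rw [_root_.map_smul, smul_eq_mul]
        exact h.symm
      have hinner : (innerSL ℝ x) x = ‖x‖ ^ (2 : ℕ) := by
        rw [innerSL_apply_apply]; exact real_inner_self_eq_norm_sq x
      have hpow : ‖x‖ ^ (t - 2) * ‖x‖ ^ (2 : ℕ) = ‖x‖ ^ t := by
        rw [← Real.rpow_natCast ‖x‖ 2, ← Real.rpow_add hxx]
        norm_num
      have hLρx : Lρ x = ‖x‖ ^ t * (2 * u x * fderiv ℝ u x x)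
          + u x ^ (2 : ℕ) * (t * (‖x‖ ^ (t - 2) * ‖x‖ ^ (2 : ℕ))) := by
        simp only [hLρ, ContinuousLinearMap.add_apply, ContinuousLinearMap.coe_smul',
          Pi.smul_apply, smul_eq_mul, hinner]
        ring
      rw [hpow] at hLρx
      rw [hsum, hsum2, hLρx]
      simp only [Finset.sum_const, Finset.card_univ, Fintype.card_fin, nsmul_eq_mul]
      simp only [hρdef, hGdef, hcdef]
      ring
  -- integrability
  have hρcs : HasCompactSupport ρ := hcs_helper h2u (fun x hx => by
    by_contra hxx; exact hx (by simp [hρdef, image_eq_zero_of_notMem_tsupport hxx]))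
  have hρcont : Continuous ρ := by
    refine continuous_helper (fun x hx => by simp [hρdef, hu0 x hx]) (fun x hx0 => ?_)
    exact ((continuous_norm.continuousAt).rpow_const
      (Or.inl (norm_ne_zero_iff.mpr hx0))).mul ((hu.continuous.pow 2).continuousAt)
  have hρint : Integrable ρ := hρcont.integrable_of_hasCompactSupport hρcs
  have hgradcont : Continuous (fun x : E => gradient u x) := by
    have h1 : Continuous (fderiv ℝ u) := hu.continuous_fderiv (by simp)
    exact (InnerProductSpace.toDual ℝ (EuclideanSpace ℝ (Fin n))).symm.continuous.comp h1
  have hHcs : HasCompactSupport H := hcs_helper h2u (fun x hx => by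
    by_contra hxx; exact hx (by simp [hHdef, hgradu0 x hxx]))
  have hHcont : Continuous H := by
    refine continuous_helper (fun x hx => by
      simp [hHdef, hgradu0 x (fun hm => by have := hsupp x hm; linarith)]) (fun x hx0 => ?_)
    exact ((continuous_norm.continuousAt).rpow_const
      (Or.inl (norm_ne_zero_iff.mpr hx0))).mul ((hgradcont.norm.pow 2).continuousAt)
  have hHint : Integrable H := hHcont.integrable_of_hasCompactSupport hHcs
  have hGcs : HasCompactSupport G := hcs_helper h2u (fun x hx => by
    by_contra hxx; exact hx (by simp [hGdef, image_eq_zero_of_notMem_tsupport hxx]))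
  have hGcont : Continuous G := by
    refine continuous_helper (fun x hx => by simp [hGdef, hu0 x hx]) (fun x hx0 => ?_)
    exact (((continuous_norm.continuousAt).rpow_const
      (Or.inl (norm_ne_zero_iff.mpr hx0))).mul (hu.continuous.continuousAt)).mul
      (((hu.continuous_fderiv (by simp)).clm_apply continuous_id).continuousAt)
  have hGint : Integrable G := hGcont.integrable_of_hasCompactSupport hGcs
  have hfi : ∀ i, Integrable (fun x : E => fderiv ℝ (w i) x (EuclideanSpace.single i (1 : ℝ))) := by
    intro i
    have hcont : Continuous fun x : E => fderiv ℝ (w i) x (EuclideanSpace.single i (1 : ℝ)) :=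
      ((hwC1 i).continuous_fderiv one_ne_zero).clm_apply continuous_const
    have hcs : HasCompactSupport
        fun x : E => fderiv ℝ (w i) x (EuclideanSpace.single i (1 : ℝ)) := by
      refine hcs_helper h2u (fun x hx => ?_)
      by_contra hxx
      have hev : w i =ᶠ[nhds x] (fun _ => (0 : ℝ)) := by
        filter_upwards [hnotsupp x hxx] with y hy
        simp [hwdef, hy]
      refine hx ?_
      show fderiv ℝ (w i) x (EuclideanSpace.single i (1 : ℝ)) = 0
      rw [hev.fderiv_eq, fderiv_const_apply]
      simp
    exact hcont.integrable_of_hasCompactSupport hcs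
  have hzero_i : ∀ i, ∫ x : E, fderiv ℝ (w i) x (EuclideanSpace.single i (1 : ℝ)) = 0 := by
    intro i
    obtain ⟨Ci, hCi⟩ := (hwC1 i).lipschitzWith_of_hasCompactSupport (hwcs i) one_ne_zero
    have h0 := integral_lineDeriv_eq_zero hCi (hwcs i) (EuclideanSpace.single i (1 : ℝ))
    rw [← h0]
    refine integral_congr_ae (Filter.Eventually.of_forall fun x => ?_)
    exact (((hwdiff i) x).lineDeriv_eq_fderiv).symm
  have hDzero : c * (∫ x : E, ρ x) + 2 * (∫ x : E, G x) = 0 := by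
    have h1 : ∫ x : E, (c * ρ x + 2 * G x) = 0 := by
      have h2 : ∫ x : E, (c * ρ x + 2 * G x)
          = ∫ x : E, ∑ i, fderiv ℝ (w i) x (EuclideanSpace.single i (1 : ℝ)) :=
        integral_congr_ae (Filter.Eventually.of_forall fun x => (hkey x).symm)
      rw [h2, integral_finset_sum _ (fun i _ => hfi i)]
      simp [hzero_i]
    rw [integral_add (hρint.const_mul c) (hGint.const_mul 2),
      integral_const_mul, integral_const_mul] at h1
    exact h1
  -- AM-GM
  have hamgm : ∀ X Y : ℝ, 2 * (X * Y) ≤ (c / 2) * X ^ (2 : ℕ) + (2 / c) * Y ^ (2 : ℕ) := by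
    intro X Y
    have hkey2 : (c / 2) * X ^ (2 : ℕ) + (2 / c) * Y ^ (2 : ℕ) - 2 * (X * Y)
        = (c * X - 2 * Y) ^ (2 : ℕ) / (2 * c) := by
      field_simp
      ring
    have h3 : (0 : ℝ) ≤ (c * X - 2 * Y) ^ (2 : ℕ) / (2 * c) :=
      div_nonneg (sq_nonneg _) (by linarith)
    linarith [hkey2, h3]
  have hpt : ∀ x : E, 2 * |G x| ≤ (c / 2) * ρ x + (2 / c) * H x := by
    intro x
    by_cases hxs : x ∈ tsupport u
    · have hxx : (0 : ℝ) < ‖x‖ := hmem2 x hxs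
      have hop : |fderiv ℝ u x x| ≤ ‖gradient u x‖ * ‖x‖ := by
        rw [hgradnorm]
        calc |fderiv ℝ u x x| = ‖fderiv ℝ u x x‖ := (Real.norm_eq_abs _).symm
        _ ≤ ‖fderiv ℝ u x‖ * ‖x‖ := (fderiv ℝ u x).le_opNorm x
      have hG1 : |G x| ≤ ‖x‖ ^ t * (|u x| * (‖gradient u x‖ * ‖x‖)) := by
        calc |G x| = ‖x‖ ^ t * |u x| * |fderiv ℝ u x x| := by
              simp [hGdef, abs_mul, abs_of_nonneg (Real.rpow_nonneg (norm_nonneg x) t)]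
        _ ≤ ‖x‖ ^ t * |u x| * (‖gradient u x‖ * ‖x‖) :=
              mul_le_mul_of_nonneg_left hop (by positivity)
        _ = ‖x‖ ^ t * (|u x| * (‖gradient u x‖ * ‖x‖)) := by ring
      have h2 := hamgm (|u x|) (‖gradient u x‖ * ‖x‖)
      have hmul := mul_le_mul_of_nonneg_left h2 (Real.rpow_nonneg (norm_nonneg x) t)
      have hHx : H x = ‖x‖ ^ t * (‖gradient u x‖ * ‖x‖) ^ (2 : ℕ) := by
        simp only [hHdef]
        rw [Real.rpow_add hxx, Real.rpow_two]
        ring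
      have hρx : ρ x = ‖x‖ ^ t * |u x| ^ (2 : ℕ) := by simp [hρdef, sq_abs]
      calc 2 * |G x| ≤ 2 * (‖x‖ ^ t * (|u x| * (‖gradient u x‖ * ‖x‖))) := by linarith [hG1]
      _ = ‖x‖ ^ t * (2 * (|u x| * (‖gradient u x‖ * ‖x‖))) := by ring
      _ ≤ ‖x‖ ^ t * ((c / 2) * |u x| ^ (2 : ℕ) + (2 / c) * (‖gradient u x‖ * ‖x‖) ^ (2 : ℕ)) :=
            hmul
      _ = (c / 2) * ρ x + (2 / c) * H x := by rw [hρx, hHx]; ring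
    · have hu0' : u x = 0 := image_eq_zero_of_notMem_tsupport hxs
      have hG0 : G x = 0 := by simp [hGdef, hu0']
      have hρ0 : ρ x = 0 := by simp [hρdef, hu0']
      have hH0 : (0 : ℝ) ≤ H x := by
        simp only [hHdef]
        positivity
      rw [hG0, hρ0]
      have : (0 : ℝ) ≤ (2 / c) * H x := mul_nonneg (by positivity) hH0
      simp only [abs_zero, mul_zero]
      linarith
  -- conclusion
  have habs : -(2 * ∫ x : E, G x) ≤ 2 * ∫ x : E, |G x| := by
    have h1 : |∫ x : E, G x| ≤ ∫ x : E, |G x| := by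
      simpa [Real.norm_eq_abs] using norm_integral_le_integral_norm (μ := volume) G
    have h2 := neg_abs_le (∫ x : E, G x)
    linarith
  have hmono : 2 * ∫ x : E, |G x| ≤ (c / 2) * (∫ x : E, ρ x) + (2 / c) * (∫ x : E, H x) := by
    have h1 : ∫ x : E, 2 * |G x| ≤ ∫ x : E, ((c / 2) * ρ x + (2 / c) * H x) :=
      integral_mono (hGint.abs.const_mul 2)
        ((hρint.const_mul _).add (hHint.const_mul _)) hpt
    rw [integral_const_mul] at h1
    rw [integral_add (hρint.const_mul _) (hHint.const_mul _),
      integral_const_mul, integral_const_mul] at h1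
    exact h1
  clear_value c
  have hfinal : (c / 2) * (∫ x : E, ρ x) ≤ (2 / c) * (∫ x : E, H x) := by
    have hsplitc : c * (∫ x : E, ρ x) = (c / 2) * (∫ x : E, ρ x) + (c / 2) * (∫ x : E, ρ x) := by
      ring
    linarith [hDzero, habs, hmono, hsplitc]
  have hc2 : (0 : ℝ) < 2 / c := by positivity
  calc (∫ x : E, ρ x) = (2 / c) * ((c / 2) * (∫ x : E, ρ x)) := by
        field_simp
  _ ≤ (2 / c) * ((2 / c) * (∫ x : E, H x)) := mul_le_mul_of_nonneg_left hfinal (le_of_lt hc2)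
  _ = (2 / c) ^ (2 : ℕ) * (∫ x : E, H x) := by ring

lemma aubinTalenti_hasFDerivAt (p κ₀ : ℝ) (hp : 1 < p) (x : E) :
    HasFDerivAt (aubinTalenti n p κ₀)
      ((κ₀ * ((-((n : ℝ) - p) / p) * (1 + ‖x‖ ^ (p / (p - 1))) ^ (-((n : ℝ) - p) / p - 1)
        * ((p / (p - 1)) * ‖x‖ ^ (p / (p - 1) - 2)))) • innerSL ℝ x) x := by
  have hp1 : (0 : ℝ) < p - 1 := by linarith
  have hp'1 : 1 < p / (p - 1) := by
    rw [lt_div_iff₀ hp1]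
    linarith
  have hN : HasFDerivAt (fun y : E => ‖y‖ ^ (p / (p - 1)))
      ((p / (p - 1) * ‖x‖ ^ (p / (p - 1) - 2)) • innerSL ℝ x) x :=
    hasFDerivAt_norm_rpow x hp'1
  have hbase : (0 : ℝ) < 1 + ‖x‖ ^ (p / (p - 1)) := by positivity
  have h1 : HasDerivAt (fun c : ℝ => (1 + c) ^ (-((n : ℝ) - p) / p))
      ((-((n : ℝ) - p) / p) * (1 + ‖x‖ ^ (p / (p - 1))) ^ (-((n : ℝ) - p) / p - 1) * 1)
      (‖x‖ ^ (p / (p - 1))) := by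
    have hout : HasDerivAt (fun c : ℝ => c ^ (-((n : ℝ) - p) / p))
        ((-((n : ℝ) - p) / p) * (1 + ‖x‖ ^ (p / (p - 1))) ^ (-((n : ℝ) - p) / p - 1))
        (1 + ‖x‖ ^ (p / (p - 1))) := Real.hasDerivAt_rpow_const (Or.inl (ne_of_gt hbase))
    have hin : HasDerivAt (fun c : ℝ => 1 + c) 1 (‖x‖ ^ (p / (p - 1))) :=
      (hasDerivAt_id _).const_add 1
    exact hout.comp _ hin
  have h2 := (h1.const_mul κ₀).comp_hasFDerivAt x hN
  have h3 : aubinTalenti n p κ₀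
      = (fun c : ℝ => κ₀ * (1 + c) ^ (-((n : ℝ) - p) / p)) ∘ (fun y : E => ‖y‖ ^ (p / (p - 1))) :=
    rfl
  rw [h3]
  refine h2.congr_fderiv ?_
  rw [smul_smul]
  congr 1
  ring

lemma aubinTalenti_grad_norm (p κ₀ : ℝ) (hp : 1 < p) (x : E) :
    ‖gradient (aubinTalenti n p κ₀) x‖
      = |κ₀ * ((-((n : ℝ) - p) / p) * (1 + ‖x‖ ^ (p / (p - 1))) ^ (-((n : ℝ) - p) / p - 1)
          * ((p / (p - 1)) * ‖x‖ ^ (p / (p - 1) - 2)))| * ‖x‖ := by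
  have hF := aubinTalenti_hasFDerivAt (n := n) p κ₀ hp x
  have h1 : ‖gradient (aubinTalenti n p κ₀) x‖ = ‖fderiv ℝ (aubinTalenti n p κ₀) x‖ :=
    LinearIsometryEquiv.norm_map _ _
  rw [h1, hF.fderiv, norm_smul, Real.norm_eq_abs, innerSL_apply_norm]

lemma aubinTalenti_pos (p κ₀ : ℝ) (hκ : 0 < κ₀) (x : E) : 0 < aubinTalenti n p κ₀ x := by
  have hbase : (0 : ℝ) < 1 + ‖x‖ ^ (p / (p - 1)) := by positivity
  exact mul_pos hκ (Real.rpow_pos_of_pos hbase _)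

lemma aubinTalenti_continuous (p κ₀ : ℝ) (hp : 1 < p) : Continuous (aubinTalenti n p κ₀) := by
  have hpm1 : (0 : ℝ) < p - 1 := by linarith
  have hp' : (0 : ℝ) ≤ p / (p - 1) := le_of_lt (by positivity)
  refine continuous_const.mul ?_
  refine Continuous.rpow_const ?_ (fun x => Or.inl ?_)
  · exact continuous_const.add (continuous_norm.rpow_const (fun x => Or.inr hp'))
  · have : (0 : ℝ) < 1 + ‖x‖ ^ (p / (p - 1)) := by positivity
    exact ne_of_gt this

lemma aubinTalenti_pow_le (p κ₀ : ℝ) (hp : 2 ≤ p) (hpn : p < (n : ℝ)) (hκ : 0 < κ₀)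
    {q : ℝ} (hq : 0 < q) {x : E} (hx : (0 : ℝ) < ‖x‖) :
    aubinTalenti n p κ₀ x ^ q ≤ κ₀ ^ q * ‖x‖ ^ ((p / (p - 1)) * (-((n : ℝ) - p) / p) * q) := by
  have hp1 : (0 : ℝ) < p - 1 := by linarith
  have he : -((n : ℝ) - p) / p ≤ 0 := by
    apply div_nonpos_of_nonpos_of_nonneg <;> linarith
  have hrp : (0 : ℝ) < ‖x‖ ^ (p / (p - 1)) := Real.rpow_pos_of_pos hx _
  have h1 : (1 + ‖x‖ ^ (p / (p - 1))) ^ (-((n : ℝ) - p) / p)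
      ≤ (‖x‖ ^ (p / (p - 1))) ^ (-((n : ℝ) - p) / p) :=
    Real.rpow_le_rpow_of_nonpos hrp (by linarith) he
  have h2 : (‖x‖ ^ (p / (p - 1))) ^ (-((n : ℝ) - p) / p)
      = ‖x‖ ^ ((p / (p - 1)) * (-((n : ℝ) - p) / p)) :=
    (Real.rpow_mul (norm_nonneg x) _ _).symm
  have h3 : aubinTalenti n p κ₀ x ≤ κ₀ * ‖x‖ ^ ((p / (p - 1)) * (-((n : ℝ) - p) / p)) := by
    rw [aubinTalenti]
    rw [← h2]
    exact mul_le_mul_of_nonneg_left h1 (le_of_lt hκ)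
  have h4 : (0 : ℝ) ≤ aubinTalenti n p κ₀ x := le_of_lt (aubinTalenti_pos p κ₀ hκ x)
  calc aubinTalenti n p κ₀ x ^ q
      ≤ (κ₀ * ‖x‖ ^ ((p / (p - 1)) * (-((n : ℝ) - p) / p))) ^ q :=
        Real.rpow_le_rpow h4 h3 (le_of_lt hq)
  _ = κ₀ ^ q * (‖x‖ ^ ((p / (p - 1)) * (-((n : ℝ) - p) / p))) ^ q :=
        Real.mul_rpow (le_of_lt hκ) (Real.rpow_nonneg (norm_nonneg x) _)
  _ = κ₀ ^ q * ‖x‖ ^ ((p / (p - 1)) * (-((n : ℝ) - p) / p) * q) := by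
        rw [← Real.rpow_mul (norm_nonneg x)]

lemma gradient_aubinTalenti_lower (p κ₀ : ℝ) (hp : 2 ≤ p) (hpn : p < (n : ℝ)) (hκ : 0 < κ₀)
    {x : E} (hx : 1 ≤ ‖x‖) :
    κ₀ * (((n : ℝ) - p) / (p - 1)) * 2 ^ (-((n : ℝ) - p) / p - 1)
      * ‖x‖ ^ (-((n : ℝ) - 1) / (p - 1))
      ≤ ‖gradient (aubinTalenti n p κ₀) x‖ := by
  have hp1 : (0 : ℝ) < p - 1 := by linarith
  have hxx : (0 : ℝ) < ‖x‖ := by linarith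
  have hp' : (0 : ℝ) < p / (p - 1) := by positivity
  rw [aubinTalenti_grad_norm p κ₀ (by linarith) x]
  have hrp1 : (1 : ℝ) ≤ ‖x‖ ^ (p / (p - 1)) := by
    calc (1 : ℝ) = 1 ^ (p / (p - 1)) := (Real.one_rpow _).symm
    _ ≤ ‖x‖ ^ (p / (p - 1)) := Real.rpow_le_rpow (by norm_num) hx (le_of_lt hp')
  have hbase : (0 : ℝ) < 1 + ‖x‖ ^ (p / (p - 1)) := by positivity
  have hXpos : (0 : ℝ) < (1 + ‖x‖ ^ (p / (p - 1))) ^ (-((n : ℝ) - p) / p - 1) :=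
    Real.rpow_pos_of_pos hbase _
  -- rewrite the absolute value
  have habs : |κ₀ * ((-((n : ℝ) - p) / p) * (1 + ‖x‖ ^ (p / (p - 1))) ^ (-((n : ℝ) - p) / p - 1)
          * ((p / (p - 1)) * ‖x‖ ^ (p / (p - 1) - 2)))|
      = κ₀ * ((((n : ℝ) - p) / p) * (1 + ‖x‖ ^ (p / (p - 1))) ^ (-((n : ℝ) - p) / p - 1)
          * ((p / (p - 1)) * ‖x‖ ^ (p / (p - 1) - 2))) := by
    have hA : (-((n : ℝ) - p) / p) ≤ 0 := by
      apply div_nonpos_of_nonpos_of_nonneg <;> linarith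
    have h5 : (-((n : ℝ) - p) / p) * (1 + ‖x‖ ^ (p / (p - 1))) ^ (-((n : ℝ) - p) / p - 1) ≤ 0 :=
      mul_nonpos_of_nonpos_of_nonneg hA (le_of_lt hXpos)
    have h6 : (-((n : ℝ) - p) / p) * (1 + ‖x‖ ^ (p / (p - 1))) ^ (-((n : ℝ) - p) / p - 1)
        * ((p / (p - 1)) * ‖x‖ ^ (p / (p - 1) - 2)) ≤ 0 :=
      mul_nonpos_of_nonpos_of_nonneg h5 (by positivity)
    have h7 : κ₀ * ((-((n : ℝ) - p) / p) * (1 + ‖x‖ ^ (p / (p - 1))) ^ (-((n : ℝ) - p) / p - 1)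
        * ((p / (p - 1)) * ‖x‖ ^ (p / (p - 1) - 2))) ≤ 0 :=
      mul_nonpos_of_nonneg_of_nonpos (le_of_lt hκ) h6
    rw [abs_of_nonpos h7]
    ring
  rw [habs]
  have hcoef : (((n : ℝ) - p) / p) * (p / (p - 1)) = ((n : ℝ) - p) / (p - 1) := by
    field_simp
  have hmerge : ‖x‖ ^ ((p / (p - 1)) * (-((n : ℝ) - p) / p - 1)) * ‖x‖ ^ (p / (p - 1) - 2) * ‖x‖
      = ‖x‖ ^ (-((n : ℝ) - 1) / (p - 1)) := by
    rw [← Real.rpow_add hxx]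
    have h8 : ‖x‖ ^ ((p / (p - 1)) * (-((n : ℝ) - p) / p - 1) + (p / (p - 1) - 2)) * ‖x‖
        = ‖x‖ ^ ((p / (p - 1)) * (-((n : ℝ) - p) / p - 1) + (p / (p - 1) - 2) + 1) :=
      (Real.rpow_add_one (ne_of_gt hxx) _).symm
    rw [h8]
    congr 1
    field_simp
    ring
  have key : κ₀ * ((((n : ℝ) - p) / p) * ((2 * ‖x‖ ^ (p / (p - 1))) ^ (-((n : ℝ) - p) / p - 1))
        * ((p / (p - 1)) * ‖x‖ ^ (p / (p - 1) - 2))) * ‖x‖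
      = κ₀ * (((n : ℝ) - p) / (p - 1)) * 2 ^ (-((n : ℝ) - p) / p - 1)
        * ‖x‖ ^ (-((n : ℝ) - 1) / (p - 1)) := by
    rw [Real.mul_rpow (by norm_num : (0:ℝ) ≤ 2) (Real.rpow_nonneg (norm_nonneg x) _),
      ← Real.rpow_mul (norm_nonneg x)]
    calc κ₀ * ((((n : ℝ) - p) / p)
          * (2 ^ (-((n : ℝ) - p) / p - 1) * ‖x‖ ^ ((p / (p - 1)) * (-((n : ℝ) - p) / p - 1)))
          * ((p / (p - 1)) * ‖x‖ ^ (p / (p - 1) - 2))) * ‖x‖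
        = κ₀ * ((((n : ℝ) - p) / p) * (p / (p - 1))) * 2 ^ (-((n : ℝ) - p) / p - 1)
          * (‖x‖ ^ ((p / (p - 1)) * (-((n : ℝ) - p) / p - 1)) * ‖x‖ ^ (p / (p - 1) - 2) * ‖x‖) := by
          ring
    _ = κ₀ * (((n : ℝ) - p) / (p - 1)) * 2 ^ (-((n : ℝ) - p) / p - 1)
          * ‖x‖ ^ (-((n : ℝ) - 1) / (p - 1)) := by rw [hcoef, hmerge]
  rw [← key]
  have hXle : 1 + ‖x‖ ^ (p / (p - 1)) ≤ 2 * ‖x‖ ^ (p / (p - 1)) := by linarith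
  have hXpow : (2 * ‖x‖ ^ (p / (p - 1))) ^ (-((n : ℝ) - p) / p - 1)
      ≤ (1 + ‖x‖ ^ (p / (p - 1))) ^ (-((n : ℝ) - p) / p - 1) := by
    refine Real.rpow_le_rpow_of_nonpos hbase hXle ?_
    have hA : (-((n : ℝ) - p) / p) ≤ 0 := by
      apply div_nonpos_of_nonpos_of_nonneg <;> linarith
    linarith
  have hstep : (((n : ℝ) - p) / p) * ((2 * ‖x‖ ^ (p / (p - 1))) ^ (-((n : ℝ) - p) / p - 1))
        * ((p / (p - 1)) * ‖x‖ ^ (p / (p - 1) - 2))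
      ≤ (((n : ℝ) - p) / p) * ((1 + ‖x‖ ^ (p / (p - 1))) ^ (-((n : ℝ) - p) / p - 1))
        * ((p / (p - 1)) * ‖x‖ ^ (p / (p - 1) - 2)) := by
    refine mul_le_mul_of_nonneg_right ?_ (by positivity)
    exact mul_le_mul_of_nonneg_left hXpow (div_nonneg (by linarith) (by linarith))
  exact mul_le_mul_of_nonneg_right (mul_le_mul_of_nonneg_left hstep (le_of_lt hκ))
    (norm_nonneg x)

end Stmt18Aux

open Stmt18Aux

theorem stmt18 (n : ℕ) (hn : 2 ≤ n) (p κ₀ : ℝ) (hp : 2 ≤ p) (hpn : p < n) (hκ : 0 < κ₀) :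
    ∃ C > 0, ∀ k : ℝ, 2 ≤ k → ∀ u : EuclideanSpace ℝ (Fin n) → ℝ,
      ContDiff ℝ (⊤ : ℕ∞) u → HasCompactSupport u →
      (∀ x ∈ tsupport u, k ≤ ‖x‖) →
      ∫ x : EuclideanSpace ℝ (Fin n),
          aubinTalenti n p κ₀ x ^ (n * p / (n - p) - 2) * u x ^ (2 : ℕ)
        ≤ C * k ^ (-(p / (p - 1))) * ∫ x : EuclideanSpace ℝ (Fin n),
            ‖gradient (aubinTalenti n p κ₀) x‖ ^ (p - 2) * ‖gradient u x‖ ^ (2 : ℕ) := by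
  have hp1 : (1 : ℝ) < p := by linarith
  have hpm1 : (0 : ℝ) < p - 1 := by linarith
  have hppos : (0 : ℝ) < p := by linarith
  have hnp : (0 : ℝ) < (n : ℝ) - p := by linarith
  have hn2 : (2 : ℝ) ≤ (n : ℝ) := by exact_mod_cast hn
  set t : ℝ := (2 * (n : ℝ) - (n : ℝ) * p - p) / (p - 1) with htdef
  have hntEq : (n : ℝ) + t = ((n : ℝ) - p) / (p - 1) := by
    rw [htdef]; field_simp; ring
  have hnt : 0 < (n : ℝ) + t := by rw [hntEq]; positivity
  set q : ℝ := (n : ℝ) * p / ((n : ℝ) - p) - 2 with hqdef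
  have hq0 : 0 < q := by
    rw [hqdef, sub_pos, lt_div_iff₀ hnp]
    have e1 : (n : ℝ) * (p - 2) = (n : ℝ) * p - 2 * (n : ℝ) := by ring
    have e2 : (0 : ℝ) ≤ (n : ℝ) * (p - 2) := mul_nonneg (by linarith) (by linarith)
    linarith
  set c₀ : ℝ := κ₀ * (((n : ℝ) - p) / (p - 1)) * 2 ^ (-((n : ℝ) - p) / p - 1) with hc₀def
  have hc₀ : 0 < c₀ := by
    rw [hc₀def]
    exact mul_pos (mul_pos hκ (div_pos hnp hpm1)) (Real.rpow_pos_of_pos two_pos _)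
  have hcp2 : 0 < c₀ ^ (p - 2) := Real.rpow_pos_of_pos hc₀ _
  refine ⟨κ₀ ^ q * (2 / ((n : ℝ) + t)) ^ (2 : ℕ) * (c₀ ^ (p - 2))⁻¹, ?_, ?_⟩
  · exact mul_pos (mul_pos (Real.rpow_pos_of_pos hκ _) (pow_pos (div_pos two_pos hnt) _))
      (inv_pos.mpr hcp2)
  intro k hk u hu h2u hsupp
  have hk0 : (0 : ℝ) < k := by linarith
  have hsupp2 : ∀ x : EuclideanSpace ℝ (Fin n), x ∈ tsupport u → (2 : ℝ) ≤ ‖x‖ :=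
    fun x hx => le_trans hk (hsupp x hx)
  have hu0 : ∀ x : EuclideanSpace ℝ (Fin n), ‖x‖ < 2 → u x = 0 := fun x hx =>
    image_eq_zero_of_notMem_tsupport (fun hm => by have := hsupp2 x hm; linarith)
  have hgradnorm : ∀ x : EuclideanSpace ℝ (Fin n), ‖gradient u x‖ = ‖fderiv ℝ u x‖ := fun x =>
    LinearIsometryEquiv.norm_map _ _
  have hgradu0 : ∀ x : EuclideanSpace ℝ (Fin n), x ∉ tsupport u → ‖gradient u x‖ = 0 := by
    intro x hx
    have h0 : fderiv ℝ u x = 0 := by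
      rw [(notMem_tsupport_iff_eventuallyEq.mp hx).fderiv_eq]
      exact fderiv_const_apply 0
    rw [hgradnorm, h0, norm_zero]
  have hgradu0' : ∀ x : EuclideanSpace ℝ (Fin n), ‖x‖ < 2 → ‖gradient u x‖ = 0 := fun x hx =>
    hgradu0 x (fun hm => by have := hsupp2 x hm; linarith)
  -- continuity and integrability of the four integrands
  have hvcont : Continuous (aubinTalenti n p κ₀) := aubinTalenti_continuous p κ₀ hp1
  have hvqcont : Continuous fun x : EuclideanSpace ℝ (Fin n) => aubinTalenti n p κ₀ x ^ q :=
    hvcont.rpow_const (fun x => Or.inl (ne_of_gt (aubinTalenti_pos p κ₀ hκ x)))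
  have hint1 : Integrable (fun x : EuclideanSpace ℝ (Fin n) =>
      aubinTalenti n p κ₀ x ^ q * u x ^ (2 : ℕ)) := by
    refine (hvqcont.mul (hu.continuous.pow 2)).integrable_of_hasCompactSupport
      (hcs_helper h2u ?_)
    intro x hx
    by_contra hxx
    exact hx (by simp [image_eq_zero_of_notMem_tsupport hxx])
  have hint2 : Integrable (fun x : EuclideanSpace ℝ (Fin n) => ‖x‖ ^ t * u x ^ (2 : ℕ)) := by
    refine Continuous.integrable_of_hasCompactSupport ?_ (hcs_helper h2u ?_)
    · refine continuous_helper (fun x hx => by simp [hu0 x hx]) (fun x hx0 => ?_)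
      exact ((continuous_norm.continuousAt).rpow_const
        (Or.inl (norm_ne_zero_iff.mpr hx0))).mul ((hu.continuous.pow 2).continuousAt)
    · intro x hx
      by_contra hxx
      exact hx (by simp [image_eq_zero_of_notMem_tsupport hxx])
  have hgraducont : Continuous (fun x : EuclideanSpace ℝ (Fin n) => gradient u x) := by
    have h1 : Continuous (fderiv ℝ u) := hu.continuous_fderiv (by simp)
    exact (InnerProductSpace.toDual ℝ (EuclideanSpace ℝ (Fin n))).symm.continuous.comp h1
  have hint3 : Integrable (fun x : EuclideanSpace ℝ (Fin n) =>
      ‖x‖ ^ (t + 2) * ‖gradient u x‖ ^ (2 : ℕ)) := by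
    refine Continuous.integrable_of_hasCompactSupport ?_ (hcs_helper h2u ?_)
    · refine continuous_helper (fun x hx => by simp [hgradu0' x hx]) (fun x hx0 => ?_)
      exact ((continuous_norm.continuousAt).rpow_const
        (Or.inl (norm_ne_zero_iff.mpr hx0))).mul ((hgraducont.norm.pow 2).continuousAt)
    · intro x hx
      by_contra hxx
      exact hx (by simp [hgradu0 x hxx])
  have hint4 : Integrable (fun x : EuclideanSpace ℝ (Fin n) =>
      ‖gradient (aubinTalenti n p κ₀) x‖ ^ (p - 2) * ‖gradient u x‖ ^ (2 : ℕ)) := by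
    refine Continuous.integrable_of_hasCompactSupport ?_ (hcs_helper h2u ?_)
    · refine continuous_helper (fun x hx => by simp [hgradu0' x hx]) (fun x hx0 => ?_)
      refine ContinuousAt.mul ?_ ((hgraducont.norm.pow 2).continuousAt)
      refine ContinuousAt.rpow_const ?_ (Or.inr (by linarith))
      have hrw : (fun y : EuclideanSpace ℝ (Fin n) => ‖gradient (aubinTalenti n p κ₀) y‖)
          = fun y : EuclideanSpace ℝ (Fin n) =>
            |κ₀ * ((-((n : ℝ) - p) / p) * (1 + ‖y‖ ^ (p / (p - 1))) ^ (-((n : ℝ) - p) / p - 1)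
              * ((p / (p - 1)) * ‖y‖ ^ (p / (p - 1) - 2)))| * ‖y‖ :=
        funext (fun y => aubinTalenti_grad_norm p κ₀ hp1 y)
      rw [hrw]
      have c1 : ContinuousAt (fun y : EuclideanSpace ℝ (Fin n) =>
          (1 + ‖y‖ ^ (p / (p - 1))) ^ (-((n : ℝ) - p) / p - 1)) x := by
        refine ContinuousAt.rpow_const ?_ (Or.inl (ne_of_gt (by positivity)))
        exact (continuous_const.add
          (continuous_norm.rpow_const (fun _ => Or.inr (by positivity)))).continuousAt
      have c2 : ContinuousAt (fun y : EuclideanSpace ℝ (Fin n) =>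
          ‖y‖ ^ (p / (p - 1) - 2)) x :=
        (continuous_norm.continuousAt).rpow_const (Or.inl (norm_ne_zero_iff.mpr hx0))
      exact (((continuousAt_const.mul ((continuousAt_const.mul c1).mul
        (continuousAt_const.mul c2))).abs).mul continuous_norm.continuousAt)
    · intro x hx
      by_contra hxx
      exact hx (by simp [hgradu0 x hxx])
  -- pointwise bound 1
  have hP1 : ∀ x : EuclideanSpace ℝ (Fin n),
      aubinTalenti n p κ₀ x ^ q * u x ^ (2 : ℕ)
        ≤ (κ₀ ^ q * k ^ (-(p / (p - 1)))) * (‖x‖ ^ t * u x ^ (2 : ℕ)) := by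
    intro x
    by_cases hxs : x ∈ tsupport u
    · have hxk : k ≤ ‖x‖ := hsupp x hxs
      have hxpos : (0 : ℝ) < ‖x‖ := by linarith
      have h1 := aubinTalenti_pow_le (n := n) p κ₀ hp hpn hκ hq0 hxpos
      have hexp : (p / (p - 1)) * (-((n : ℝ) - p) / p) * q = t - p / (p - 1) := by
        rw [hqdef, htdef]
        field_simp
        ring
      rw [hexp] at h1
      have h2 : ‖x‖ ^ (t - p / (p - 1)) = ‖x‖ ^ t * ‖x‖ ^ (-(p / (p - 1))) := by
        rw [← Real.rpow_add hxpos]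
        ring_nf
      have h3 : ‖x‖ ^ (-(p / (p - 1))) ≤ k ^ (-(p / (p - 1))) := by
        refine Real.rpow_le_rpow_of_nonpos hk0 hxk ?_
        have : (0 : ℝ) < p / (p - 1) := by positivity
        linarith
      have h4 : aubinTalenti n p κ₀ x ^ q ≤ κ₀ ^ q * k ^ (-(p / (p - 1))) * ‖x‖ ^ t := by
        rw [h2] at h1
        calc aubinTalenti n p κ₀ x ^ q ≤ κ₀ ^ q * (‖x‖ ^ t * ‖x‖ ^ (-(p / (p - 1)))) := h1
        _ ≤ κ₀ ^ q * (‖x‖ ^ t * k ^ (-(p / (p - 1)))) := by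
            refine mul_le_mul_of_nonneg_left ?_ (Real.rpow_nonneg (le_of_lt hκ) _)
            exact mul_le_mul_of_nonneg_left h3 (Real.rpow_nonneg (norm_nonneg x) _)
        _ = κ₀ ^ q * k ^ (-(p / (p - 1))) * ‖x‖ ^ t := by ring
      calc aubinTalenti n p κ₀ x ^ q * u x ^ (2 : ℕ)
          ≤ (κ₀ ^ q * k ^ (-(p / (p - 1))) * ‖x‖ ^ t) * u x ^ (2 : ℕ) :=
            mul_le_mul_of_nonneg_right h4 (by positivity)
      _ = (κ₀ ^ q * k ^ (-(p / (p - 1)))) * (‖x‖ ^ t * u x ^ (2 : ℕ)) := by ring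
    · have hux : u x = 0 := image_eq_zero_of_notMem_tsupport hxs
      simp [hux]
  -- pointwise bound 2
  have hP2 : ∀ x : EuclideanSpace ℝ (Fin n),
      c₀ ^ (p - 2) * (‖x‖ ^ (t + 2) * ‖gradient u x‖ ^ (2 : ℕ))
        ≤ ‖gradient (aubinTalenti n p κ₀) x‖ ^ (p - 2) * ‖gradient u x‖ ^ (2 : ℕ) := by
    intro x
    by_cases hxs : x ∈ tsupport u
    · have hx1 : (1 : ℝ) ≤ ‖x‖ := by linarith [hsupp2 x hxs]
      have hxpos : (0 : ℝ) < ‖x‖ := by linarith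
      have hlow := gradient_aubinTalenti_lower (n := n) p κ₀ hp hpn hκ hx1
      rw [← hc₀def] at hlow
      have h1 : (c₀ * ‖x‖ ^ (-((n : ℝ) - 1) / (p - 1))) ^ (p - 2)
          ≤ ‖gradient (aubinTalenti n p κ₀) x‖ ^ (p - 2) :=
        Real.rpow_le_rpow (by positivity) hlow (by linarith)
      have h2 : (c₀ * ‖x‖ ^ (-((n : ℝ) - 1) / (p - 1))) ^ (p - 2)
          = c₀ ^ (p - 2) * ‖x‖ ^ (t + 2) := by
        rw [Real.mul_rpow (le_of_lt hc₀) (Real.rpow_nonneg (norm_nonneg x) _),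
          ← Real.rpow_mul (norm_nonneg x)]
        congr 1
        rw [htdef]
        field_simp
        ring
      rw [h2] at h1
      calc c₀ ^ (p - 2) * (‖x‖ ^ (t + 2) * ‖gradient u x‖ ^ (2 : ℕ))
          = (c₀ ^ (p - 2) * ‖x‖ ^ (t + 2)) * ‖gradient u x‖ ^ (2 : ℕ) := by ring
      _ ≤ ‖gradient (aubinTalenti n p κ₀) x‖ ^ (p - 2) * ‖gradient u x‖ ^ (2 : ℕ) :=
            mul_le_mul_of_nonneg_right h1 (by positivity)
    · have h0 : ‖gradient u x‖ = 0 := hgradu0 x hxs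
      rw [h0]
      simp
  -- assemble
  have step1 : (∫ x : EuclideanSpace ℝ (Fin n), aubinTalenti n p κ₀ x ^ q * u x ^ (2 : ℕ))
      ≤ (κ₀ ^ q * k ^ (-(p / (p - 1))))
        * ∫ x : EuclideanSpace ℝ (Fin n), ‖x‖ ^ t * u x ^ (2 : ℕ) := by
    have h := integral_mono hint1 (hint2.const_mul (κ₀ ^ q * k ^ (-(p / (p - 1))))) hP1
    rwa [integral_const_mul] at h
  have step2 := hardy (n := n) t hnt u hu h2u hsupp2
  have step3 : (∫ x : EuclideanSpace ℝ (Fin n), ‖x‖ ^ (t + 2) * ‖gradient u x‖ ^ (2 : ℕ))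
      ≤ (c₀ ^ (p - 2))⁻¹ * ∫ x : EuclideanSpace ℝ (Fin n),
          ‖gradient (aubinTalenti n p κ₀) x‖ ^ (p - 2) * ‖gradient u x‖ ^ (2 : ℕ) := by
    have h := integral_mono (hint3.const_mul (c₀ ^ (p - 2))) hint4 hP2
    rw [integral_const_mul] at h
    calc (∫ x : EuclideanSpace ℝ (Fin n), ‖x‖ ^ (t + 2) * ‖gradient u x‖ ^ (2 : ℕ))
        = (c₀ ^ (p - 2))⁻¹ * (c₀ ^ (p - 2)
            * ∫ x : EuclideanSpace ℝ (Fin n), ‖x‖ ^ (t + 2) * ‖gradient u x‖ ^ (2 : ℕ)) := by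
          rw [← mul_assoc, inv_mul_cancel₀ (ne_of_gt hcp2), one_mul]
    _ ≤ (c₀ ^ (p - 2))⁻¹ * ∫ x : EuclideanSpace ℝ (Fin n),
            ‖gradient (aubinTalenti n p κ₀) x‖ ^ (p - 2) * ‖gradient u x‖ ^ (2 : ℕ) :=
          mul_le_mul_of_nonneg_left h (inv_nonneg.mpr (le_of_lt hcp2))
  have hnn1 : (0 : ℝ) ≤ κ₀ ^ q * k ^ (-(p / (p - 1))) := by positivity
  calc (∫ x : EuclideanSpace ℝ (Fin n), aubinTalenti n p κ₀ x ^ q * u x ^ (2 : ℕ))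
      ≤ (κ₀ ^ q * k ^ (-(p / (p - 1))))
        * ∫ x : EuclideanSpace ℝ (Fin n), ‖x‖ ^ t * u x ^ (2 : ℕ) := step1
  _ ≤ (κ₀ ^ q * k ^ (-(p / (p - 1)))) * ((2 / ((n : ℝ) + t)) ^ (2 : ℕ)
        * ∫ x : EuclideanSpace ℝ (Fin n), ‖x‖ ^ (t + 2) * ‖gradient u x‖ ^ (2 : ℕ)) :=
      mul_le_mul_of_nonneg_left step2 hnn1
  _ ≤ (κ₀ ^ q * k ^ (-(p / (p - 1)))) * ((2 / ((n : ℝ) + t)) ^ (2 : ℕ)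
        * ((c₀ ^ (p - 2))⁻¹ * ∫ x : EuclideanSpace ℝ (Fin n),
            ‖gradient (aubinTalenti n p κ₀) x‖ ^ (p - 2) * ‖gradient u x‖ ^ (2 : ℕ))) := by
      refine mul_le_mul_of_nonneg_left ?_ hnn1
      exact mul_le_mul_of_nonneg_left step3 (by positivity)
  _ = κ₀ ^ q * (2 / ((n : ℝ) + t)) ^ (2 : ℕ) * (c₀ ^ (p - 2))⁻¹ * k ^ (-(p / (p - 1)))
        * ∫ x : EuclideanSpace ℝ (Fin n),
            ‖gradient (aubinTalenti n p κ₀) x‖ ^ (p - 2) * ‖gradient u x‖ ^ (2 : ℕ) := by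
      ring
end
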